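/- arXiv:1611.09457 — 10 statements merged into one kernel-verified Lean document; each statement's English description precedes it below -/
import Mathlib

section
/- Let K_{p_1,…,p_r} be the complete r-partite graph with parts V_1,…,V_r, n = p_1+⋯+p_r vertices and Laplacian L, and let A be a set of vertices. Set t_i = |A ∩ V_i| and d_i = n − p_i. Then for every real number x, det(L(A|A) − x·I) · ∏_{k=1}^r (d_k − x) = ∏_{k=1}^r (n − t_k − x)(d_k − x)^{p_k − t_k} + Σ_{k=1}^r (t_k − p_k)(d_k − x)^{p_k − t_k} · ∏_{l ≠ k} (n − t_l − x)(d_l − x)^{p_l − t_l}. (Equivalently, the characteristic polynomial of L(A|A) is (1 + Σ_k (t_k − p_k)/(d_k + p_k − t_k − x)) · ∏_k (d_k + p_k − t_k − x)(d_k − x)^{p_k − t_k − 1}, noting d_k + p_k − t_k = n − t_k.) -/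
open BigOperators

section Aux
open Matrix Finset

lemma det_aux {ι : Type} [Fintype ι] [DecidableEq ι] {r : ℕ} (g : ι → Fin r)
    (y : Fin r → ℝ) (m : Fin r → ℕ)
    (hm : ∀ i, m i = (Finset.univ.filter fun w => g w = i).card)
    (hy : ∀ i, y i ≠ 0) (hyb : ∀ i, y i + m i ≠ 0) :
    (Matrix.det (Matrix.of fun w w' =>
        if w = w' then y (g w) else if g w = g w' then 0 else (-1:ℝ)))
      * ∏ i, y i
    = ∏ i, ((y i + m i) * y i ^ m i)
      - ∑ j, (m j : ℝ) * y j ^ m j *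
          ∏ l ∈ Finset.univ.erase j, ((y l + m l) * y l ^ m l) := by
  classical
  set Δ : Matrix ι ι ℝ := Matrix.diagonal fun w => y (g w) with hΔ
  set Δ' : Matrix ι ι ℝ := Matrix.diagonal fun w => (y (g w))⁻¹ with hΔ'
  set U : Matrix ι (Fin r) ℝ := Matrix.of fun w i => if g w = i then 1 else 0 with hU
  set V : Matrix (Fin r) ι ℝ := Matrix.of fun i w => (if g w = i then (1:ℝ) else 0) - 1 with hV
  have hΔΔ' : Δ * Δ' = 1 := by
    rw [hΔ, hΔ', diagonal_mul_diagonal]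
    convert Matrix.diagonal_one
    exact mul_inv_cancel₀ (hy _)
  have hM : (Matrix.of fun w w' =>
      if w = w' then y (g w) else if g w = g w' then 0 else (-1:ℝ)) = Δ + U * V := by
    ext w w'
    simp only [Matrix.add_apply, Matrix.mul_apply, hΔ, hU, hV, Matrix.diagonal_apply,
      Matrix.of_apply]
    rw [Finset.sum_congr rfl (fun i _ => by
      show (if g w = i then (1:ℝ) else 0) * ((if g w' = i then (1:ℝ) else 0) - 1)
        = if g w = i then ((if g w' = i then (1:ℝ) else 0) - 1) else 0
      split_ifs <;> ring)]
    rw [Finset.sum_ite_eq Finset.univ (g w) (fun i => (if g w' = i then (1:ℝ) else 0) - 1)]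
    by_cases h1 : w = w'
    · subst h1; simp
    · simp only [h1, if_false]
      by_cases h2 : g w = g w'
      · simp [h2, eq_comm]
      · simp [h2, Ne.symm h2]
  set a : Fin r → ℝ := fun i => (m i : ℝ) * (y i)⁻¹ with ha
  set b : Fin r → ℝ := fun i => 1 + a i with hbdef
  set c : Fin r → ℝ := fun i => -(b i)⁻¹ with hc
  have hb : ∀ i, b i = (y i + m i) * (y i)⁻¹ := by
    intro i
    rw [hbdef, ha]
    show 1 + (m i : ℝ) * (y i)⁻¹ = _
    rw [add_mul, mul_inv_cancel₀ (hy i)]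
  have hbne : ∀ i, b i ≠ 0 := fun i => by
    rw [hb i]; exact mul_ne_zero (hyb i) (inv_ne_zero (hy i))
  have hfact : Δ + U * V = Δ * (1 + (Δ' * U) * V) := by
    rw [Matrix.mul_add, Matrix.mul_one, ← Matrix.mul_assoc, ← Matrix.mul_assoc, hΔΔ',
      Matrix.one_mul]
  have hW : (1 + V * (Δ' * U)) = Matrix.diagonal b * (1 + Matrix.replicateCol Unit c * Matrix.replicateRow Unit a) := by
    ext i j
    have hVU : (V * (Δ' * U)) i j = (m j : ℝ) * (((if j = i then (1:ℝ) else 0) - 1) * (y j)⁻¹) := by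
      rw [Matrix.mul_apply]
      rw [Finset.sum_congr rfl (fun w _ => by
        show V i w * (Δ' * U) w j = if g w = j then ((if j = i then (1:ℝ) else 0) - 1) * (y j)⁻¹ else 0
        rw [Matrix.mul_apply]
        rw [Finset.sum_congr rfl (fun w' _ => by
          show Δ' w w' * U w' j = if w' = w then (y (g w))⁻¹ * (if g w = j then 1 else 0) else 0
          rw [hΔ', hU]
          by_cases h : w' = w
          · subst h; simp [Matrix.diagonal_apply_eq]
          · simp [Matrix.diagonal_apply_ne' _ h, h])]
        rw [Finset.sum_ite_eq' Finset.univ w]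
        simp only [Finset.mem_univ, if_true, hV, Matrix.of_apply]
        by_cases h : g w = j
        · rw [h]; simp [h]
        · simp [h])]
      rw [← Finset.sum_filter, Finset.sum_const, ← hm j, nsmul_eq_mul]
    rw [Matrix.add_apply, hVU]
    rw [Matrix.diagonal_mul, Matrix.add_apply, Matrix.mul_apply]
    simp only [Matrix.replicateCol_apply, Matrix.replicateRow_apply, Finset.univ_unique, Finset.sum_singleton]
    by_cases h : i = j
    · subst h
      simp only [Matrix.one_apply_eq, eq_self_iff_true, if_true, hc]
      have h2 : b i * (1 + -(b i)⁻¹ * a i) = b i - a i := by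
        field_simp [hbne i]
        try ring
      rw [h2, hbdef]; ring
    · simp only [Matrix.one_apply_ne h, if_neg (Ne.symm h), hc]
      have h2 : b i * (0 + -(b i)⁻¹ * a j) = -a j := by
        field_simp [hbne i]
        try ring
      rw [h2, ha]; ring
  have hdetΔ : Δ.det = ∏ i, y i ^ m i := by
    rw [hΔ, Matrix.det_diagonal, ← Finset.prod_fiberwise Finset.univ g (fun w => y (g w))]
    refine Finset.prod_congr rfl fun i _ => ?_
    rw [Finset.prod_congr rfl (fun w hw => by rw [(Finset.mem_filter.mp hw).2]),
      Finset.prod_const, ← hm i]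
  have hdet : (Matrix.of fun w w' =>
      if w = w' then y (g w) else if g w = g w' then 0 else (-1:ℝ)).det
      = (∏ i, y i ^ m i) * ((∏ i, b i) * (1 - ∑ j, a j * (b j)⁻¹)) := by
    rw [hM, hfact, Matrix.det_mul, hdetΔ, Matrix.det_one_add_mul_comm, hW, Matrix.det_mul,
      Matrix.det_diagonal, Matrix.det_one_add_replicateCol_mul_replicateRow]
    congr 2
    rw [dotProduct, sub_eq_add_neg, ← Finset.sum_neg_distrib]
    exact congrArg _ (Finset.sum_congr rfl fun j _ => by rw [hc]; ring)
  rw [hdet]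
  have hprod : (∏ i, y i ^ m i) * (∏ i, b i) * (∏ i, y i)
      = ∏ i, ((y i + (m i : ℝ)) * y i ^ m i) := by
    rw [← Finset.prod_mul_distrib, ← Finset.prod_mul_distrib]
    refine Finset.prod_congr rfl fun i _ => ?_
    rw [hb i]
    field_simp [hy i]
  calc (∏ i, y i ^ m i) * ((∏ i, b i) * (1 - ∑ j, a j * (b j)⁻¹)) * ∏ i, y i
      = ((∏ i, y i ^ m i) * (∏ i, b i) * (∏ i, y i)) * (1 - ∑ j, a j * (b j)⁻¹) := by ring
    _ = (∏ i, ((y i + (m i : ℝ)) * y i ^ m i)) * (1 - ∑ j, a j * (b j)⁻¹) := by rw [hprod]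
    _ = (∏ i, ((y i + (m i : ℝ)) * y i ^ m i))
        - ∑ j, (∏ i, ((y i + (m i : ℝ)) * y i ^ m i)) * (a j * (b j)⁻¹) := by
        rw [mul_sub, mul_one, Finset.mul_sum]
    _ = _ := by
        congr 1
        refine Finset.sum_congr rfl fun j _ => ?_
        rw [← Finset.mul_prod_erase Finset.univ _ (Finset.mem_univ j), hb j]
        have haj : a j = (m j : ℝ) * (y j)⁻¹ := rfl
        rw [haj]
        field_simp [hy j, hyb j]

open Polynomial in
lemma det_aux_all {ι : Type} [Fintype ι] [DecidableEq ι] {r : ℕ} (g : ι → Fin r)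
    (c : Fin r → ℝ) (m : Fin r → ℕ)
    (hm : ∀ i, m i = (Finset.univ.filter fun w => g w = i).card) (x : ℝ) :
    (Matrix.det (Matrix.of fun w w' =>
        if w = w' then c (g w) - x else if g w = g w' then 0 else (-1:ℝ)))
      * ∏ i, (c i - x)
    = ∏ i, ((c i - x + m i) * (c i - x) ^ m i)
      - ∑ j, (m j : ℝ) * (c j - x) ^ m j *
          ∏ l ∈ Finset.univ.erase j, ((c l - x + m l) * (c l - x) ^ m l) := by
  classical
  set P : ℝ[X] := (Matrix.det (Matrix.of fun w w' =>
      if w = w' then C (c (g w)) - X else if g w = g w' then 0 else (-1:ℝ[X])))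
      * ∏ i, (C (c i) - X) with hP
  set Q : ℝ[X] := (∏ i, ((C (c i) - X + (m i : ℝ[X])) * (C (c i) - X) ^ m i))
      - ∑ j, (m j : ℝ[X]) * (C (c j) - X) ^ m j *
          ∏ l ∈ Finset.univ.erase j, ((C (c l) - X + (m l : ℝ[X])) * (C (c l) - X) ^ m l)
      with hQ
  have evP : ∀ z : ℝ, P.eval z = (Matrix.det (Matrix.of fun w w' =>
      if w = w' then c (g w) - z else if g w = g w' then 0 else (-1:ℝ)))
      * ∏ i, (c i - z) := by
    intro z
    rw [hP, eval_mul]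
    congr 1
    · rw [show (Matrix.of fun w w' =>
          if w = w' then C (c (g w)) - X else if g w = g w' then 0 else (-1:ℝ[X])).det.eval z
          = (evalRingHom z) (Matrix.of fun w w' =>
          if w = w' then C (c (g w)) - X else if g w = g w' then 0 else (-1:ℝ[X])).det from rfl,
        RingHom.map_det]
      congr 1
      ext w w'
      simp only [Matrix.map_apply, Matrix.of_apply]
      by_cases h1 : w = w'
      · simp [h1]
      · by_cases h2 : g w = g w' <;> simp [h1, h2]
    · rw [Polynomial.eval_prod]
      simp
  have evQ : ∀ z : ℝ, Q.eval z =
      ∏ i, ((c i - z + m i) * (c i - z) ^ m i)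
      - ∑ j, (m j : ℝ) * (c j - z) ^ m j *
          ∏ l ∈ Finset.univ.erase j, ((c l - z + m l) * (c l - z) ^ m l) := by
    intro z
    rw [hQ, eval_sub]
    congr 1
    · rw [Polynomial.eval_prod]
      simp
    · rw [Polynomial.eval_finset_sum]
      refine Finset.sum_congr rfl fun j _ => ?_
      rw [eval_mul, eval_mul, Polynomial.eval_prod]
      simp
  have hPQ : P = Q := by
    apply Polynomial.eq_of_infinite_eval_eq
    have hfin : (Set.range c ∪ Set.range fun i => c i + (m i : ℝ)).Finite :=
      (Set.finite_range c).union (Set.finite_range _)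
    refine hfin.infinite_compl.mono ?_
    intro z hz
    have hgood : ∀ i, c i - z ≠ 0 ∧ (c i - z) + (m i : ℝ) ≠ 0 := by
      intro i
      simp only [Set.mem_compl_iff, Set.mem_union, Set.mem_range, not_or, not_exists] at hz
      constructor
      · intro h; exact hz.1 i (by linarith [sub_eq_zero.mp h])
      · intro h; exact hz.2 i (by linarith)
    show P.eval z = Q.eval z
    rw [evP z, evQ z]
    exact det_aux g (fun i => c i - z) m hm (fun i => (hgood i).1) (fun i => (hgood i).2)
  have := congrArg (Polynomial.eval x) hPQ
  rw [evP x, evQ x] at this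
  exact this

end Aux

/-- **Theorem 2 (char. poly. of a principal submatrix of the Laplacian of a
complete multipartite graph).**  Let `L` be the Laplacian of
`K_{p₁,…,p_r}` (vertex set `Σ i, Fin (p i)`, `n = Σ pᵢ`), let `A` be a set of
vertices, `tᵢ = |A ∩ Vᵢ|`, `dᵢ = n − pᵢ`.  Then for all real `x`,
`det(L(A|A) − x·I) · Π_k (d_k − x)
  = Π_k (n − t_k − x)(d_k − x)^{p_k − t_k}
    + Σ_k (t_k − p_k)(d_k − x)^{p_k − t_k} · Π_{l ≠ k} (n − t_l − x)(d_l − x)^{p_l − t_l}`. -/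
theorem charpoly_submatrix_lapMatrix_completeMultipartite
    (r : ℕ) (p : Fin r → ℕ) (hp : ∀ i, 1 ≤ p i)
    (n : ℕ) (hn : n = ∑ i, p i)
    (L : Matrix (Σ i : Fin r, Fin (p i)) (Σ i : Fin r, Fin (p i)) ℝ)
    (hL : L = (SimpleGraph.completeMultipartiteGraph fun i : Fin r => Fin (p i)).lapMatrix ℝ)
    (A : Finset (Σ i : Fin r, Fin (p i)))
    (t : Fin r → ℕ) (ht : ∀ i, t i = (A.filter fun v => v.1 = i).card)
    (d : Fin r → ℕ) (hd : ∀ i, d i = n - p i)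
    (x : ℝ) :
    Matrix.det
        (L.submatrix
            (Subtype.val : {w : Σ i : Fin r, Fin (p i) // w ∉ A} → Σ i : Fin r, Fin (p i))
            Subtype.val
          - x • (1 : Matrix {w : Σ i : Fin r, Fin (p i) // w ∉ A}
                    {w : Σ i : Fin r, Fin (p i) // w ∉ A} ℝ)) *
        ∏ k, ((d k : ℝ) - x) =
      (∏ k, (((n : ℝ) - t k - x) * ((d k : ℝ) - x) ^ (p k - t k))) +
        ∑ k, ((t k : ℝ) - p k) * ((d k : ℝ) - x) ^ (p k - t k) *
          ∏ l ∈ Finset.univ.erase k, (((n : ℝ) - t l - x) * ((d l : ℝ) - x) ^ (p l - t l)) := by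
  classical
  have pn : ∀ i, p i ≤ n := fun i =>
    hn ▸ Finset.single_le_sum (f := p) (fun _ _ => Nat.zero_le _) (Finset.mem_univ i)
  have hfiber : ∀ i, (Finset.univ.filter fun v : (Σ j : Fin r, Fin (p j)) => v.1 = i).card
      = p i := by
    intro i
    have e : {v : (Σ j : Fin r, Fin (p j)) // v.1 = i} ≃ Fin (p i) :=
      { toFun := fun v => Fin.cast (congrArg p v.2) v.1.2
        invFun := fun a => ⟨⟨i, a⟩, rfl⟩
        left_inv := by rintro ⟨⟨j, a⟩, rfl⟩; rfl
        right_inv := fun a => rfl }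
    rw [← Fintype.card_subtype, Fintype.card_congr e, Fintype.card_fin]
  have htA : ∀ i, t i +
      (Finset.univ.filter fun v : (Σ j : Fin r, Fin (p j)) => v.1 = i ∧ v ∉ A).card = p i := by
    intro i
    have h1 := Finset.card_filter_add_card_filter_not
      (s := Finset.univ.filter fun v : (Σ j : Fin r, Fin (p j)) => v.1 = i)
      (p := fun v => v ∈ A)
    rw [Finset.filter_filter, Finset.filter_filter, hfiber i] at h1
    have h2 : (Finset.univ.filter fun v : (Σ j : Fin r, Fin (p j)) => v.1 = i ∧ v ∈ A).card
        = t i := by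
      rw [ht i]
      congr 1
      ext v
      simp [and_comm]
    rw [h2] at h1
    exact h1
  have tle : ∀ i, t i ≤ p i := fun i => htA i ▸ Nat.le_add_right _ _
  have hmS : ∀ i, p i - t i =
      (Finset.univ.filter fun w : {w : (Σ j : Fin r, Fin (p j)) // w ∉ A} => w.1.1 = i).card := by
    intro i
    have e2 : {w : {v : (Σ j : Fin r, Fin (p j)) // v ∉ A} // w.1.1 = i}
        ≃ {v : (Σ j : Fin r, Fin (p j)) // v.1 = i ∧ v ∉ A} :=
      { toFun := fun w => ⟨w.1.1, ⟨w.2, w.1.2⟩⟩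
        invFun := fun v => ⟨⟨v.1, v.2.2⟩, v.2.1⟩
        left_inv := fun _ => rfl
        right_inv := fun _ => rfl }
    rw [← Fintype.card_subtype, Fintype.card_congr e2, Fintype.card_subtype]
    have := htA i
    omega
  have hdeg : ∀ v : (Σ j : Fin r, Fin (p j)),
      (SimpleGraph.completeMultipartiteGraph fun i : Fin r => Fin (p i)).degree v = n - p v.1 := by
    intro v
    have hnb : (SimpleGraph.completeMultipartiteGraph fun i : Fin r => Fin (p i)).neighborFinset v
        = Finset.univ.filter fun w : (Σ j : Fin r, Fin (p j)) => ¬ (w.1 = v.1) := by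
      ext w
      simp [SimpleGraph.mem_neighborFinset, ne_comm, eq_comm]
    show ((SimpleGraph.completeMultipartiteGraph fun i : Fin r => Fin (p i)).neighborFinset v).card = _
    rw [hnb]
    have h1 := Finset.card_filter_add_card_filter_not
      (s := (Finset.univ : Finset (Σ j : Fin r, Fin (p j))))
      (p := fun w => w.1 = v.1)
    rw [hfiber v.1] at h1
    have hcard : (Finset.univ : Finset (Σ j : Fin r, Fin (p j))).card = n := by
      rw [Finset.card_univ, Fintype.card_sigma]
      simp [hn]
    rw [hcard] at h1
    omega
  have hmat : L.submatrix
      (Subtype.val : {w : Σ i : Fin r, Fin (p i) // w ∉ A} → Σ i : Fin r, Fin (p i))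
      Subtype.val - x • 1
      = Matrix.of (fun w w' : {w : Σ i : Fin r, Fin (p i) // w ∉ A} =>
          if w = w' then (d w.1.1 : ℝ) - x else if w.1.1 = w'.1.1 then 0 else -1) := by
    ext w w'
    simp only [Matrix.sub_apply, Matrix.submatrix_apply, Matrix.smul_apply, hL,
      SimpleGraph.lapMatrix, Matrix.sub_apply, SimpleGraph.degMatrix, Matrix.diagonal_apply,
      SimpleGraph.adjMatrix_apply, Matrix.of_apply, smul_eq_mul]
    by_cases h : w = w'
    · subst h
      simp only [if_pos rfl, Matrix.one_apply_eq]
      rw [hdeg w.1, ← hd w.1.1]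
      simp [SimpleGraph.irrefl]
    · have hvv : w.1 ≠ w'.1 := fun hh => h (Subtype.ext hh)
      simp only [if_neg h, Matrix.one_apply_ne h, if_neg hvv]
      by_cases h2 : w.1.1 = w'.1.1
      · simp [h2]
      · simp [h2]
  rw [hmat, det_aux_all (ι := {w : Σ i : Fin r, Fin (p i) // w ∉ A})
    (fun w => w.1.1) (fun i => (d i : ℝ)) (fun i => p i - t i) hmS x]
  have hcast : ∀ k, ((d k : ℝ) - x + ((p k - t k : ℕ) : ℝ)) = (n : ℝ) - t k - x := by
    intro k
    rw [hd k, Nat.cast_sub (pn k), Nat.cast_sub (tle k)]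
    ring
  simp only [hcast]
  rw [sub_eq_add_neg, ← Finset.sum_neg_distrib]
  congr 1
  refine Finset.sum_congr rfl fun j _ => ?_
  rw [Nat.cast_sub (tle j)]
  ring
end

section
/- Let K_{p_1,…,p_r} (r ≥ 2) be the complete r-partite graph with parts V_1,…,V_r, n = p_1+⋯+p_r vertices and Laplacian L. If u ∈ V_l and v ∈ V_{l'} with l ≠ l', then n·(n − p_l)·(n − p_{l'}) · det(L(u,v|u,v)) = n^{r−2}·(n−1)·(2n − p_l − p_{l'}) · ∏_{i=1}^r (n − p_i)^{p_i − 1}. (Equivalently, det(L(u,v|u,v)) = n^{r−3}·(n−1)(2n−p_l−p_{l'})/((n−p_l)(n−p_{l'})) · ∏_{i=1}^r (n−p_i)^{p_i−1}.) -/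
open BigOperators
open Finset Matrix

/-- For the complete multipartite graph `K_{p₁,…,p_r}` (`r ≥ 2`) with Laplacian `L`,
if `u ∈ V_l` and `v ∈ V_{l'}` with `l ≠ l'`, then
`n(n−p_l)(n−p_{l'}) · det(L(u,v|u,v)) = n^{r−2}(n−1)(2n−p_l−p_{l'}) · Πᵢ (n−pᵢ)^{pᵢ−1}`. -/
theorem det_submatrix_two_vertices_different_parts
    (r : ℕ) (hr : 2 ≤ r) (p : Fin r → ℕ) (hp : ∀ i, 1 ≤ p i)
    (n : ℕ) (hn : n = ∑ i, p i)
    (L : Matrix (Σ i : Fin r, Fin (p i)) (Σ i : Fin r, Fin (p i)) ℝ)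
    (hL : L = (SimpleGraph.completeMultipartiteGraph fun i : Fin r => Fin (p i)).lapMatrix ℝ)
    (u v : Σ i : Fin r, Fin (p i)) (l l' : Fin r)
    (hu : u.1 = l) (hv : v.1 = l') (hll : l ≠ l') :
    (n : ℝ) * ((n : ℝ) - p l) * ((n : ℝ) - p l') *
        Matrix.det
          (L.submatrix
            (Subtype.val : {w : Σ i : Fin r, Fin (p i) // w ≠ u ∧ w ≠ v} → Σ i : Fin r, Fin (p i))
            Subtype.val) =
      (n : ℝ) ^ (r - 2) * ((n : ℝ) - 1) * (2 * (n : ℝ) - p l - p l') *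
        ∏ i, ((n : ℝ) - p i) ^ (p i - 1) := by
  classical
  set G := SimpleGraph.completeMultipartiteGraph fun i : Fin r => Fin (p i) with hG
  set S := {w : Σ i : Fin r, Fin (p i) // w ≠ u ∧ w ≠ v} with hS
  -- numeric basics
  have hplt : ∀ i, p i < n := by
    intro i
    obtain ⟨j, hj⟩ := Fintype.exists_ne_of_one_lt_card (by simp only [Fintype.card_fin]; omega) i
    have hj2 : j ∈ univ.erase i := by simp [hj]
    have h1 : p i + 1 ≤ n := by
      rw [hn, ← Finset.add_sum_erase _ _ (mem_univ i)]
      have := hp j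
      calc p i + 1 ≤ p i + p j := by omega
      _ ≤ p i + ∑ k ∈ univ.erase i, p k := by
          gcongr; exact Finset.single_le_sum (fun k _ => Nat.zero_le _) hj2
    omega
  have hn2 : 2 ≤ n := (hp l).trans_lt (hplt l)
  have hd : ∀ i : Fin r, (0:ℝ) < (n:ℝ) - p i := by
    intro i; have := hplt i
    have : (p i : ℝ) < n := by exact_mod_cast this
    linarith
  have hdne : ∀ i : Fin r, ((n:ℝ) - p i) ≠ 0 := fun i => ne_of_gt (hd i)
  have hN0 : (n:ℝ) ≠ 0 := by positivity
  have hN1 : (n:ℝ) - 1 ≠ 0 := by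
    have : (2:ℝ) ≤ n := by exact_mod_cast hn2
    linarith
  have huv : u ≠ v := by
    intro h; exact hll (hu ▸ hv ▸ (by rw [h]))
  -- sum/prod over the subtype
  have hmem : ∀ x : Σ i : Fin r, Fin (p i),
      x ∈ (univ.erase v).erase u ↔ (x ≠ u ∧ x ≠ v) := by
    intro x; simp [Finset.mem_erase]
  have hSsum : ∀ f : (Σ i : Fin r, Fin (p i)) → ℝ,
      ∑ w : S, f w.1 = (∑ x, f x) - f u - f v := by
    intro f
    rw [← Finset.sum_subtype _ hmem f,
      Finset.sum_erase_eq_sub (by simp [Finset.mem_erase, huv]),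
      Finset.sum_erase_eq_sub (mem_univ v)]
    ring
  have hSprod : ∀ f : (Σ i : Fin r, Fin (p i)) → ℝ,
      f v * (f u * ∏ w : S, f w.1) = ∏ x, f x := by
    intro f
    rw [← Finset.prod_subtype _ hmem f,
      Finset.mul_prod_erase _ f (show u ∈ univ.erase v by simp [Finset.mem_erase, huv]),
      Finset.mul_prod_erase _ f (mem_univ v)]
  -- degree
  have hdeg : ∀ w : Σ i : Fin r, Fin (p i), G.degree w = n - p w.1 := by
    intro w
    rw [← SimpleGraph.card_neighborFinset_eq_degree]
    have h1 : G.neighborFinset w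
        = univ.filter (fun x : Σ i : Fin r, Fin (p i) => ¬ (x.1 = w.1)) := by
      ext x
      simp [SimpleGraph.mem_neighborFinset, hG, ne_comm]
    rw [h1, Finset.filter_not, Finset.card_sdiff_of_subset (Finset.filter_subset _ _)]
    have h2 : (univ.filter fun x : Σ i : Fin r, Fin (p i) => x.1 = w.1).card = p w.1 := by
      rw [Finset.card_filter, ← Finset.univ_sigma_univ, Finset.sum_sigma]
      simp [Finset.sum_ite_eq, apply_ite]
    have h3 : (univ : Finset (Σ i : Fin r, Fin (p i))).card = n := by
      rw [Finset.card_univ]; simp [hn]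
    rw [h2, h3]
  -- matrices
  set E : Matrix S (Fin r) ℝ := Matrix.of (fun w i => if w.1.1 = i then (1:ℝ) else 0) with hE
  set Cm : Matrix (Fin r) (Fin r) ℝ := (1 : Matrix (Fin r) (Fin r) ℝ)
      - Matrix.of (fun _ _ => (1:ℝ)) with hCm
  set dS : S → ℝ := fun w => (n:ℝ) - p w.1.1 with hdS
  set D' : Matrix S S ℝ := Matrix.diagonal (fun w => ((n:ℝ) - p w.1.1)⁻¹) with hD'
  have hECE : ∀ w x : S, (E * (Cm * Eᵀ)) w x = (if w.1.1 = x.1.1 then (1:ℝ) else 0) - 1 := by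
    intro w x
    have h1 : (Cm * Eᵀ) = Matrix.of (fun i (x : S) => Cm i x.1.1) := by
      ext i y
      simp only [Matrix.mul_apply, hE, Matrix.transpose_apply, Matrix.of_apply,
        mul_ite, mul_one, mul_zero]
      rw [Finset.sum_ite_eq univ y.1.1 (fun j => Cm i j)]
      simp
    rw [h1]
    simp only [Matrix.mul_apply, hE, Matrix.of_apply, ite_mul, one_mul, zero_mul]
    rw [Finset.sum_ite_eq univ w.1.1 (fun i => Cm i x.1.1)]
    simp [hCm, Matrix.one_apply]
  have hM : L.submatrix (Subtype.val : S → Σ i : Fin r, Fin (p i)) Subtype.val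
      = Matrix.diagonal dS + E * (Cm * Eᵀ) := by
    ext w x
    rw [Matrix.add_apply, hECE w x]
    simp only [Matrix.submatrix_apply, hL, SimpleGraph.lapMatrix, SimpleGraph.degMatrix,
      Matrix.sub_apply, Matrix.diagonal_apply, SimpleGraph.adjMatrix_apply, hdS]
    have hadj : G.Adj w.1 x.1 ↔ w.1.1 ≠ x.1.1 := by simp [hG]
    by_cases hwx : w = x
    · subst hwx
      have : (G.degree w.1 : ℝ) = (n:ℝ) - p w.1.1 := by
        rw [hdeg w.1]
        have := le_of_lt (hplt w.1.1)
        push_cast [Nat.cast_sub this]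
        ring
      simp [hadj, this]
      exact this
    · have hwx1 : w.1 ≠ x.1 := fun h => hwx (Subtype.ext h)
      by_cases hb : w.1.1 = x.1.1
      · simp [hwx, hwx1, hadj, hb]
      · simp [hwx, hwx1, hadj, hb]
  -- step: E^T D' E = diagonal q
  set q : Fin r → ℝ := fun i =>
      ((p i : ℝ) - (if l = i then 1 else 0) - (if l' = i then 1 else 0)) * ((n:ℝ) - p i)⁻¹ with hq
  have hQ : Eᵀ * (D' * E) = Matrix.diagonal q := by
    ext i j
    rw [Matrix.mul_apply]
    simp only [Matrix.transpose_apply, hD', Matrix.diagonal_mul, hE, Matrix.of_apply]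
    by_cases hij : i = j
    · subst hij
      have h1 : ∀ w : S, (if w.1.1 = i then (1:ℝ) else 0) *
          (((n:ℝ) - p w.1.1)⁻¹ * (if w.1.1 = i then (1:ℝ) else 0))
          = (fun x : Σ k : Fin r, Fin (p k) =>
              if x.1 = i then ((n:ℝ) - p i)⁻¹ else 0) w.1 := by
        intro w; by_cases h : w.1.1 = i <;> simp [h]
      rw [Finset.sum_congr rfl (fun w _ => h1 w),
        hSsum (fun x : Σ k : Fin r, Fin (p k) => if x.1 = i then ((n:ℝ) - p i)⁻¹ else 0)]
      have h2 : ∑ x : Σ k : Fin r, Fin (p k), (if x.1 = i then ((n:ℝ) - p i)⁻¹ else 0)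
          = (p i : ℝ) * ((n:ℝ) - p i)⁻¹ := by
        rw [← Finset.univ_sigma_univ, Finset.sum_sigma]
        have h3 : ∀ x : Fin r, ∑ _ : Fin (p x), (if x = i then ((n:ℝ) - p i)⁻¹ else 0)
            = if x = i then (p i : ℝ) * ((n:ℝ) - p i)⁻¹ else 0 := by
          intro x
          by_cases h : x = i
          · subst h; simp [Finset.sum_const, mul_comm]
          · simp [h]
        rw [Finset.sum_congr rfl (fun x _ => h3 x), Finset.sum_ite_eq' univ i]
        simp
      rw [h2]
      simp only [Matrix.diagonal_apply_eq, hq, hu, hv, sub_mul, ite_mul, one_mul, zero_mul]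
    · rw [Matrix.diagonal_apply_ne _ hij]
      apply Finset.sum_eq_zero
      intro w _
      by_cases h1 : w.1.1 = i
      · by_cases h2 : w.1.1 = j
        · exact absurd (h1.symm.trans h2) hij
        · simp [h1, h2, hij]
      · simp [h1]
  -- step: first Weinstein–Aronszajn
  have hdet1 : (L.submatrix (Subtype.val : S → Σ i : Fin r, Fin (p i)) Subtype.val).det
      = (∏ w : S, dS w) * (1 + Cm * Matrix.diagonal q).det := by
    rw [hM]
    have hinv : Matrix.diagonal dS * D' = 1 := by
      rw [hD', hdS, Matrix.diagonal_mul_diagonal]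
      have h0 : (fun w : S => ((n:ℝ) - p w.1.1) * ((n:ℝ) - p w.1.1)⁻¹) = fun _ => 1 :=
        funext fun w => mul_inv_cancel₀ (hdne w.1.1)
      rw [h0, Matrix.diagonal_one]
    have h2 : Matrix.diagonal dS + E * (Cm * Eᵀ)
        = Matrix.diagonal dS * (1 + (D' * E) * (Cm * Eᵀ)) := by
      rw [Matrix.mul_add, Matrix.mul_one]
      congr 1
      rw [← Matrix.mul_assoc (Matrix.diagonal dS) (D' * E) (Cm * Eᵀ),
        ← Matrix.mul_assoc (Matrix.diagonal dS) D' E, hinv, Matrix.one_mul]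
    rw [h2, Matrix.det_mul, Matrix.det_diagonal, Matrix.det_one_add_mul_comm]
    congr 2
    rw [Matrix.mul_assoc, hQ]
  -- step: second reduction
  set t : Fin r → ℝ := fun i => 1 + q i with ht
  set ε : Fin r → ℝ := fun i => (if l = i then 1 else 0) + (if l' = i then 1 else 0) with hε
  have hεle : ∀ i, ε i ≤ 1 := by
    intro i
    rw [hε]
    by_cases h1 : l = i
    · have h2 : ¬ l' = i := fun h => hll (h1.trans h.symm)
      simp [h1, h2]
    · by_cases h2 : l' = i <;> simp [h1, h2]
  have hNε : ∀ i, (0:ℝ) < (n:ℝ) - ε i := by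
    intro i
    have h1 : (2:ℝ) ≤ n := by exact_mod_cast hn2
    have := hεle i
    linarith
  have hNεne : ∀ i, ((n:ℝ) - ε i) ≠ 0 := fun i => ne_of_gt (hNε i)
  have ht2 : ∀ i, t i = ((n:ℝ) - ε i) * ((n:ℝ) - p i)⁻¹ := by
    intro i
    rw [ht, hq, hε]
    have := hdne i
    field_simp
    ring
  have htne : ∀ i, t i ≠ 0 := fun i => by
    rw [ht2]; exact mul_ne_zero (hNεne i) (inv_ne_zero (hdne i))
  have hC1 : (1 : Matrix (Fin r) (Fin r) ℝ) + Cm * Matrix.diagonal q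
      = Matrix.diagonal t - Matrix.replicateCol Unit (fun _ => (1:ℝ)) * Matrix.replicateRow Unit q := by
    have hcolrow : ∀ (a b : Fin r → ℝ) (i j : Fin r),
        (Matrix.replicateCol Unit a * Matrix.replicateRow Unit b) i j = a i * b j := by
      intro a b i j
      simp [Matrix.mul_apply]
    ext i j
    rw [Matrix.add_apply, Matrix.sub_apply, Matrix.mul_diagonal, hcolrow]
    simp only [hCm, Matrix.sub_apply, Matrix.one_apply, Matrix.of_apply]
    by_cases hij : i = j
    · subst hij
      rw [Matrix.diagonal_apply_eq]
      simp only [ht, if_pos rfl, eq_self_iff_true, if_true]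
      ring
    · rw [Matrix.diagonal_apply_ne _ hij]
      simp only [if_neg hij]
      ring
  have hC2 : Matrix.diagonal t - Matrix.replicateCol Unit (fun _ => (1:ℝ)) * Matrix.replicateRow Unit q
      = Matrix.diagonal t * (1 + Matrix.replicateCol Unit (fun i => -(t i)⁻¹) * Matrix.replicateRow Unit q) := by
    rw [Matrix.mul_add, Matrix.mul_one, ← Matrix.mul_assoc]
    have h3 : Matrix.diagonal t * Matrix.replicateCol Unit (fun i => -(t i)⁻¹)
        = Matrix.replicateCol Unit (fun _ => (-1:ℝ)) := by
      ext i k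
      rw [Matrix.diagonal_mul]
      simp only [Matrix.replicateCol_apply]
      rw [mul_neg, mul_inv_cancel₀ (htne i)]
    rw [h3]
    have h4 : Matrix.replicateCol Unit (fun _ : Fin r => (-1:ℝ)) * Matrix.replicateRow Unit q
        = -(Matrix.replicateCol Unit (fun _ : Fin r => (1:ℝ)) * Matrix.replicateRow Unit q) := by
      ext i j
      simp [Matrix.mul_apply, Matrix.replicateCol_apply, Matrix.replicateRow_apply]
    rw [h4, sub_eq_add_neg]
  have hdet2 : (1 + Cm * Matrix.diagonal q).det
      = (∏ i, t i) * (1 - ∑ i, q i * (t i)⁻¹) := by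
    rw [hC1, hC2, Matrix.det_mul, Matrix.det_diagonal, Matrix.det_one_add_replicateCol_mul_replicateRow]
    congr 1
    simp [dotProduct, mul_neg, sub_eq_add_neg, ← Finset.sum_neg_distrib]
  -- scalar assembly
  set P : ℝ := ∏ i, ((n:ℝ) - p i) ^ (p i - 1) with hP
  set Dp : ℝ := ∏ i, ((n:ℝ) - p i) with hDp
  have hDpne : Dp ≠ 0 := Finset.prod_ne_zero_iff.mpr (fun i _ => hdne i)
  have hl'mem : l' ∈ univ.erase l := by simp [Ne.symm hll]
  -- (F1) product over S
  have hF1 : ((n:ℝ) - p l') * (((n:ℝ) - p l) * ∏ w : S, dS w) = P * Dp := by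
    have h0 := hSprod (fun x => (n:ℝ) - p x.1)
    simp only [hu, hv] at h0
    have h1 : ∏ x : Σ k : Fin r, Fin (p k), ((n:ℝ) - p x.1) = ∏ i, ((n:ℝ) - p i) ^ (p i) := by
      rw [← Finset.univ_sigma_univ, Finset.prod_sigma]
      simp [Finset.prod_const]
    have h2 : ∏ i, ((n:ℝ) - p i) ^ (p i) = P * Dp := by
      rw [hP, hDp, ← Finset.prod_mul_distrib]
      refine Finset.prod_congr rfl (fun i _ => ?_)
      rw [← pow_succ, Nat.sub_add_cancel (hp i)]
    rw [show (∏ w : S, dS w) = ∏ w : S, ((n:ℝ) - p w.1.1) from rfl]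
    rw [h0, h1, h2]
  -- (F2) product of t
  have hcard2 : ((univ.erase l).erase l').card = r - 2 := by
    rw [Finset.card_erase_of_mem hl'mem, Finset.card_erase_of_mem (mem_univ l)]
    rw [Finset.card_univ, Fintype.card_fin]
    omega
  have hεl : ε l = 1 := by
    rw [hε]; simp [if_neg (Ne.symm hll)]
  have hεl' : ε l' = 1 := by
    rw [hε]; simp [if_neg hll]
  have hεrest : ∀ i ∈ (univ.erase l).erase l', ε i = 0 := by
    intro i hi
    simp only [Finset.mem_erase] at hi
    rw [hε]
    simp [if_neg (Ne.symm hi.2.1), if_neg (Ne.symm hi.1)]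
  have htprod : ∏ i, t i = (((n:ℝ)-1) * (((n:ℝ)-1) * (n:ℝ)^(r-2))) * Dp⁻¹ := by
    have h1 : ∏ i, t i = (∏ i, ((n:ℝ) - ε i)) * ∏ i, ((n:ℝ) - p i)⁻¹ := by
      rw [← Finset.prod_mul_distrib]
      exact Finset.prod_congr rfl (fun i _ => ht2 i)
    have h2 : ∏ i, ((n:ℝ) - p i)⁻¹ = Dp⁻¹ := by
      rw [hDp, ← Finset.prod_inv_distrib]
    have h3 : ∏ i, ((n:ℝ) - ε i)
        = ((n:ℝ) - ε l) * (((n:ℝ) - ε l') * ∏ i ∈ (univ.erase l).erase l', ((n:ℝ) - ε i)) := by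
      rw [Finset.mul_prod_erase (univ.erase l) (fun i => (n:ℝ) - ε i) hl'mem,
        Finset.mul_prod_erase univ (fun i => (n:ℝ) - ε i) (mem_univ l)]
    have h4 : ∏ i ∈ (univ.erase l).erase l', ((n:ℝ) - ε i) = (n:ℝ)^(r-2) := by
      rw [Finset.prod_congr rfl (fun i hi => by rw [hεrest i hi, sub_zero]),
        Finset.prod_const, hcard2]
    rw [h1, h2, h3, h4, hεl, hεl']
  -- (F3) the sum
  have hq' : ∀ i, q i * (t i)⁻¹
      = ((p i : ℝ) - (if l = i then 1 else 0) - (if l' = i then 1 else 0)) * ((n:ℝ) - ε i)⁻¹ := by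
    intro i
    rw [ht2 i, hq, mul_inv, inv_inv]
    field_simp [hdne i, hNεne i]
  have hsum2 : ∑ i ∈ (univ.erase l).erase l', (p i : ℝ) = (n:ℝ) - p l - p l' := by
    have h6 : ∑ i, (p i : ℝ) = (n:ℝ) := by rw [hn]; push_cast; rfl
    rw [Finset.sum_erase_eq_sub hl'mem, Finset.sum_erase_eq_sub (mem_univ l), h6]
  have hsum : ∑ i, q i * (t i)⁻¹
      = ((p l : ℝ) - 1) * ((n:ℝ)-1)⁻¹ + ((((p l' : ℝ) - 1) * ((n:ℝ)-1)⁻¹)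
        + ((n:ℝ) - p l - p l') * (n:ℝ)⁻¹) := by
    rw [Finset.sum_congr rfl (fun i _ => hq' i)]
    rw [← Finset.add_sum_erase _ _ (mem_univ l), ← Finset.add_sum_erase _ _ hl'mem]
    have hterm_l : ((p l : ℝ) - (if l = l then 1 else 0) - (if l' = l then 1 else 0))
        * ((n:ℝ) - ε l)⁻¹ = ((p l : ℝ) - 1) * ((n:ℝ)-1)⁻¹ := by
      rw [hεl]; simp [if_neg (Ne.symm hll)]
    have hterm_l' : ((p l' : ℝ) - (if l = l' then 1 else 0) - (if l' = l' then 1 else 0))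
        * ((n:ℝ) - ε l')⁻¹ = ((p l' : ℝ) - 1) * ((n:ℝ)-1)⁻¹ := by
      rw [hεl']; simp [if_neg hll]
    have hrest : ∑ i ∈ (univ.erase l).erase l',
        ((p i : ℝ) - (if l = i then 1 else 0) - (if l' = i then 1 else 0)) * ((n:ℝ) - ε i)⁻¹
        = ((n:ℝ) - p l - p l') * (n:ℝ)⁻¹ := by
      have hstep : ∀ i ∈ (univ.erase l).erase l',
          ((p i : ℝ) - (if l = i then 1 else 0) - (if l' = i then 1 else 0)) * ((n:ℝ) - ε i)⁻¹
          = (p i : ℝ) * ((n:ℝ))⁻¹ := by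
        intro i hi
        simp only [Finset.mem_erase] at hi
        rw [hεrest i (by simp [Finset.mem_erase, hi.1, hi.2.1]), sub_zero,
          if_neg (Ne.symm hi.2.1), if_neg (Ne.symm hi.1), sub_zero, sub_zero]
      rw [Finset.sum_congr rfl hstep, ← Finset.sum_mul, hsum2]
    rw [hterm_l, hterm_l', hrest]
  -- put everything together
  have key : ∀ PS X : ℝ, ((n:ℝ) - p l') * (((n:ℝ) - p l) * PS) = P * Dp →
      (n:ℝ) * ((n:ℝ) - p l) * ((n:ℝ) - p l') * (PS * X) = (n:ℝ) * (P * Dp) * X := by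
    intro PS X h
    calc (n:ℝ) * ((n:ℝ) - p l) * ((n:ℝ) - p l') * (PS * X)
        = (n:ℝ) * (((n:ℝ) - p l') * (((n:ℝ) - p l) * PS)) * X := by ring
      _ = (n:ℝ) * (P * Dp) * X := by rw [h]
  rw [hdet1, hdet2, key _ _ hF1, htprod, hsum]
  field_simp
  ring
end

section
/- Let K_{p_1,…,p_r} (r ≥ 2) be the complete r-partite graph with parts V_1,…,V_r, n = p_1+⋯+p_r vertices and Laplacian L. If u and v are distinct vertices in the same part V_l (so p_l ≥ 2), then (n − p_l) · det(L(u,v|u,v)) = 2·n^{r−2} · ∏_{i=1}^r (n − p_i)^{p_i − 1}. (Equivalently, det(L(u,v|u,v)) = n^{r−2}·(2/(n−p_l)) · ∏_{i=1}^r (n−p_i)^{p_i−1}.) -/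
open BigOperators

open Matrix

def blockEquiv {r : ℕ} (q : Fin r → ℕ) (k : Fin r) :
    Fin (q k) ≃ {a : Σ i : Fin r, Fin (q i) // a.1 = k} where
  toFun a := ⟨⟨k, a⟩, rfl⟩
  invFun x := Fin.cast (congrArg q x.2) x.1.2
  left_inv a := rfl
  right_inv x := by
    obtain ⟨⟨i, b⟩, h⟩ := x
    subst h
    rfl

lemma detAux1 (m : ℕ) (c : ℝ) (hc : c ≠ 0) :
    (Matrix.of fun a b : Fin m => (if a = b then c else 0) + 1).det = c ^ m * (1 + m / c) := by
  have h : (Matrix.of fun a b : Fin m => (if a = b then c else 0) + 1) =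
      c • (1 + Matrix.replicateCol (Fin 1) (fun _ => c⁻¹) * Matrix.replicateRow (Fin 1) (fun _ => (1:ℝ))) := by
    ext a b
    simp only [Matrix.of_apply, Matrix.smul_apply, Matrix.add_apply, Matrix.mul_apply,
      Matrix.one_apply, Matrix.replicateCol_apply, Matrix.replicateRow_apply, Finset.univ_unique,
      Finset.sum_singleton, smul_eq_mul, mul_add, mul_one, mul_inv_cancel₀ hc]
    split <;> simp
  rw [h, Matrix.det_smul]
  erw [Matrix.det_one_add_replicateCol_mul_replicateRow]
  simp only [dotProduct, Finset.sum_const, Finset.card_univ, Fintype.card_fin, nsmul_eq_mul,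
    mul_one, div_eq_mul_inv, one_mul]

lemma detAux2 {r : ℕ} (q : Fin r → ℕ) (c : Fin r → ℝ)
    (hc : ∀ i, c i ≠ 0) (hcq : ∀ i, c i + q i ≠ 0) :
    (Matrix.of fun x y : Σ i : Fin r, Fin (q i) =>
        (if x = y then c x.1 else 0) + (if x.1 = y.1 then 1 else 0) - 1).det =
      (∏ i, (c i) ^ (q i) * (1 + q i / c i)) * (1 - ∑ i, (q i : ℝ) / (c i + q i)) := by
  classical
  set N : Matrix (Σ i : Fin r, Fin (q i)) (Σ i : Fin r, Fin (q i)) ℝ := Matrix.of fun x y =>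
    (if x = y then c x.1 else 0) + (if x.1 = y.1 then 1 else 0) with hN
  set w : (Σ i : Fin r, Fin (q i)) → ℝ := fun x => (c x.1 + q x.1)⁻¹ with hw
  have hrow : ∀ x, ∑ k, N x k * w k = 1 := by
    intro x
    obtain ⟨j, s⟩ := x
    rw [← Finset.univ_sigma_univ, Finset.sum_sigma]
    rw [Finset.sum_eq_single j]
    · have h1 : ∀ a : Fin (q j), N ⟨j, s⟩ ⟨j, a⟩ = (if s = a then c j else 0) + 1 := by
        intro a
        simp only [hN, Matrix.of_apply, Sigma.mk.inj_iff, heq_eq_eq, true_and, if_true]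
      simp_rw [h1, hw, add_mul, Finset.sum_add_distrib, one_mul]
      simp_rw [ite_mul, zero_mul]
      rw [Finset.sum_ite_eq Finset.univ s (fun _ => c j * (c j + (q j : ℝ))⁻¹)]
      simp only [Finset.mem_univ, if_true, Finset.sum_const, Finset.card_univ, Fintype.card_fin,
        nsmul_eq_mul]
      field_simp
      exact div_self (hcq j)
    · intro i _ hij
      apply Finset.sum_eq_zero
      intro a _
      have h1 : N ⟨j, s⟩ ⟨i, a⟩ = 0 := by
        simp only [hN, Matrix.of_apply, Sigma.mk.inj_iff]
        rw [if_neg (fun h => hij h.1.symm), if_neg (fun h => hij h.symm)]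
        simp
      rw [h1, zero_mul]
    · simp
  -- factorization
  have hfac : (Matrix.of fun x y : Σ i : Fin r, Fin (q i) =>
        (if x = y then c x.1 else 0) + (if x.1 = y.1 then 1 else 0) - 1) =
      N * (1 + Matrix.replicateCol (Fin 1) (fun x => -(w x)) * Matrix.replicateRow (Fin 1) (fun _ => (1:ℝ))) := by
    ext x y
    have h2 : (N * (Matrix.replicateCol (Fin 1) (fun x => -(w x)) * Matrix.replicateRow (Fin 1) (fun _ => (1:ℝ)))) x y
        = -∑ k, N x k * w k := by
      simp [Matrix.mul_apply, Finset.sum_neg_distrib]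
    rw [Matrix.mul_add, Matrix.mul_one, Matrix.add_apply, h2, hrow x, hN]
    simp only [Matrix.of_apply]
    ring
  rw [hfac, Matrix.det_mul]
  erw [Matrix.det_one_add_replicateCol_mul_replicateRow]
  -- det N
  have hbt : N.BlockTriangular Sigma.fst := by
    intro x y h
    have hne : x.1 ≠ y.1 := ne_of_gt h
    simp only [hN, Matrix.of_apply]
    rw [if_neg (fun hxy => hne (congrArg Sigma.fst hxy)), if_neg hne]
    simp
  rw [hbt.det_fintype]
  have hblock : ∀ k, (N.toSquareBlock Sigma.fst k).det = (c k) ^ (q k) * (1 + q k / c k) := by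
    intro k
    rw [← Matrix.det_submatrix_equiv_self (blockEquiv q k)]
    have : (N.toSquareBlock Sigma.fst k).submatrix (blockEquiv q k) (blockEquiv q k) =
        Matrix.of fun a b : Fin (q k) => (if a = b then c k else 0) + 1 := by
      ext a b
      simp only [Matrix.submatrix_apply, Matrix.toSquareBlock_def, blockEquiv, Equiv.coe_fn_mk,
        hN, Matrix.of_apply, Sigma.mk.inj_iff, heq_eq_eq, true_and, if_true]
    rw [this, detAux1 _ _ (hc k)]
  rw [Finset.prod_congr rfl (fun k _ => hblock k)]
  -- the sum
  have hsum : ∑ x : Σ i : Fin r, Fin (q i), w x = ∑ i, (q i : ℝ) / (c i + q i) := by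
    rw [← Finset.univ_sigma_univ, Finset.sum_sigma]
    apply Finset.sum_congr rfl
    intro i _
    rw [hw]
    simp [Finset.sum_const, div_eq_mul_inv, mul_comm]
  congr 1
  simp only [dotProduct, one_mul, Finset.sum_neg_distrib, ← hsum]
  ring

lemma cardFiber {r : ℕ} (q : Fin r → ℕ) (k : Fin r) :
    Fintype.card {a : Σ i : Fin r, Fin (q i) // a.1 = k} = q k := by
  rw [← Fintype.card_congr (blockEquiv q k), Fintype.card_fin]

lemma degAux {r : ℕ} (p : Fin r → ℕ) (x : Σ i : Fin r, Fin (p i)) :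
    (SimpleGraph.completeMultipartiteGraph fun i : Fin r => Fin (p i)).degree x
      = (∑ i, p i) - p x.1 := by
  classical
  rw [← SimpleGraph.card_neighborFinset_eq_degree]
  have h1 : (SimpleGraph.completeMultipartiteGraph fun i : Fin r => Fin (p i)).neighborFinset x
      = Finset.univ \ Finset.univ.filter (fun y : Σ i : Fin r, Fin (p i) => y.1 = x.1) := by
    ext y
    rw [SimpleGraph.mem_neighborFinset]
    simp [SimpleGraph.neighborFinset, SimpleGraph.neighborSet, eq_comm, ne_comm]
  rw [h1, Finset.card_sdiff_of_subset (Finset.filter_subset _ _)]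
  congr 1
  · rw [Finset.card_univ]
    simp
  · rw [← Fintype.card_subtype, cardFiber p x.1]

def skip2 {m : ℕ} (a b : ℕ) : Fin (m - 2) → Fin m := fun k =>
  ⟨k.val + (if a ≤ k.val then 1 else 0) + (if b ≤ k.val + 1 then 1 else 0), by
    have := k.isLt; split_ifs <;> omega⟩

lemma skip2_inj {m : ℕ} {a b : ℕ} (hab : a < b) : Function.Injective (skip2 (m := m) a b) := by
  intro k1 k2 h
  have h' := congrArg Fin.val h
  simp only [skip2] at h'
  apply Fin.ext
  split_ifs at h' <;> omega

lemma skip2_ne {m : ℕ} {a b : ℕ} (hab : a < b) (k : Fin (m - 2)) :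
    (skip2 (m := m) a b k).val ≠ a ∧ (skip2 (m := m) a b k).val ≠ b := by
  simp only [skip2]
  split_ifs <;> omega

/-- For the complete multipartite graph `K_{p₁,…,p_r}` (`r ≥ 2`) with Laplacian `L`,
if `u ≠ v` both lie in the part `V_l`, then
`(n − p_l) · det(L(u,v|u,v)) = 2·n^{r−2} · Πᵢ (n−pᵢ)^{pᵢ−1}`. -/
theorem det_submatrix_two_vertices_same_part
    (r : ℕ) (hr : 2 ≤ r) (p : Fin r → ℕ) (hp : ∀ i, 1 ≤ p i)
    (n : ℕ) (hn : n = ∑ i, p i)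
    (L : Matrix (Σ i : Fin r, Fin (p i)) (Σ i : Fin r, Fin (p i)) ℝ)
    (hL : L = (SimpleGraph.completeMultipartiteGraph fun i : Fin r => Fin (p i)).lapMatrix ℝ)
    (u v : Σ i : Fin r, Fin (p i)) (l : Fin r)
    (hu : u.1 = l) (hv : v.1 = l) (huv : u ≠ v) :
    ((n : ℝ) - p l) *
        Matrix.det
          (L.submatrix
            (Subtype.val : {w : Σ i : Fin r, Fin (p i) // w ≠ u ∧ w ≠ v} → Σ i : Fin r, Fin (p i))
            Subtype.val) =
      2 * (n : ℝ) ^ (r - 2) * ∏ i, ((n : ℝ) - p i) ^ (p i - 1) := by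
  classical
  subst hL
  subst hu
  obtain ⟨ul, ua⟩ := u
  obtain ⟨vl, va⟩ := v
  dsimp only at hv ⊢
  subst hv
  have hab0 : ua ≠ va := fun h => huv (by rw [h])
  set G := SimpleGraph.completeMultipartiteGraph fun i : Fin r => Fin (p i) with hG
  set A : Fin (p vl) := min ua va with hA
  set B : Fin (p vl) := max ua va with hB
  have hAB : A < B := min_lt_max.2 hab0
  have hpl2 : 2 ≤ p vl := by
    have h1 := B.isLt
    have h2 : A.val < B.val := hAB
    omega
  have hexj : ∀ i : Fin r, ∃ j : Fin r, j ≠ i := by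
    intro i
    have h1 : 1 < Fintype.card (Fin r) := by rw [Fintype.card_fin]; omega
    exact Fintype.exists_ne_of_one_lt_card h1 i
  have hsum2 : ∀ i : Fin r, ∀ j : Fin r, j ≠ i → p i + p j ≤ n := by
    intro i j hj
    have h2 : ({i, j} : Finset (Fin r)).sum p ≤ Finset.univ.sum p :=
      Finset.sum_le_sum_of_subset (Finset.subset_univ _)
    rw [Finset.sum_pair (Ne.symm hj)] at h2
    have h3 : Finset.univ.sum p = ∑ k, p k := rfl
    omega
  have hplt : ∀ i, p i < n := by
    intro i
    obtain ⟨j, hj⟩ := hexj i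
    have := hsum2 i j hj
    have := hp j
    omega
  have hn3 : 3 ≤ n := by
    obtain ⟨j, hj⟩ := hexj vl
    have := hsum2 vl j hj
    have := hp j
    omega
  have hNne : (n : ℝ) ≠ 0 := Nat.cast_ne_zero.2 (by omega)
  have hN2ne : (n : ℝ) - 2 ≠ 0 := by
    have : (3:ℝ) ≤ n := by exact_mod_cast hn3
    linarith
  have hcne : ∀ i, (n : ℝ) - p i ≠ 0 := by
    intro i
    have : (p i : ℝ) < n := by exact_mod_cast hplt i
    linarith
  -- the reduced part sizes
  set q : Fin r → ℕ := fun i => if i = vl then p vl - 2 else p i with hq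
  have hql : q vl = p vl - 2 := by simp [hq]
  have hqne : ∀ i, i ≠ vl → q i = p i := fun i hi => by simp [hq, hi]
  -- the embedding
  have hGmapx : ∀ i : Fin r, ∃ g : Fin (q i) → Fin (p i), Function.Injective g ∧
      (i = vl → ∀ k, (g k).val ≠ A.val ∧ (g k).val ≠ B.val) := by
    intro i
    by_cases h : i = vl
    · subst h
      refine ⟨fun k => skip2 A.val B.val (Fin.cast (by rw [hql]) k), ?_, ?_⟩
      · intro k1 k2 hk
        have := skip2_inj hAB hk
        exact Fin.cast_injective _ this
      · intro _ k
        exact skip2_ne hAB _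
    · exact ⟨Fin.cast (hqne i h), Fin.cast_injective _, fun hc => absurd hc h⟩
  choose g hginj hgne using hGmapx
  set f : (Σ i : Fin r, Fin (q i)) → (Σ i : Fin r, Fin (p i)) :=
    fun x => ⟨x.1, g x.1 x.2⟩ with hf
  have hfinj : Function.Injective f := by
    intro x y hxy
    obtain ⟨i, kx⟩ := x
    obtain ⟨j, ky⟩ := y
    have h1 : i = j := congrArg Sigma.fst hxy
    subst h1
    simp only [hf, Sigma.mk.inj_iff, heq_eq_eq, true_and] at hxy ⊢
    exact hginj i hxy
  have hfne : ∀ x, f x ≠ ⟨vl, ua⟩ ∧ f x ≠ ⟨vl, va⟩ := by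
    intro x
    obtain ⟨i, k⟩ := x
    by_cases h : i = vl
    · subst h
      have h2 := hgne i rfl k
      have hset : (A.val = ua.val ∧ B.val = va.val) ∨ (A.val = va.val ∧ B.val = ua.val) := by
        rw [hA, hB]
        rcases le_total ua va with h3 | h3
        · left; constructor
          · rw [min_eq_left h3]
          · rw [max_eq_right h3]
        · right; constructor
          · rw [min_eq_right h3]
          · rw [max_eq_left h3]
      constructor <;>
      · intro hcon
        have h4 : (g i k).val = _ := congrArg (fun z : Σ i : Fin r, Fin (p i) => (z.2.val : ℕ)) hcon
        dsimp at h4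
        rcases hset with ⟨h5, h6⟩ | ⟨h5, h6⟩ <;> omega
    · constructor <;> exact fun hcon => h (congrArg Sigma.fst hcon)
  -- cardinalities
  have hcards : Fintype.card (Σ i : Fin r, Fin (q i)) =
      Fintype.card {w : Σ i : Fin r, Fin (p i) // w ≠ ⟨vl, ua⟩ ∧ w ≠ ⟨vl, va⟩} := by
    have hc1 : Fintype.card (Σ i : Fin r, Fin (q i)) = n - 2 := by
      rw [Fintype.card_sigma]
      simp only [Fintype.card_fin]
      have h1 : ∑ i, q i = q vl + ∑ i ∈ Finset.univ.erase vl, q i :=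
        (Finset.add_sum_erase _ q (Finset.mem_univ vl)).symm
      have h2 : ∑ i, p i = p vl + ∑ i ∈ Finset.univ.erase vl, p i :=
        (Finset.add_sum_erase _ p (Finset.mem_univ vl)).symm
      have h3 : ∑ i ∈ Finset.univ.erase vl, q i = ∑ i ∈ Finset.univ.erase vl, p i :=
        Finset.sum_congr rfl fun i hi => hqne i (Finset.ne_of_mem_erase hi)
      omega
    have hc2 : Fintype.card {w : Σ i : Fin r, Fin (p i) // w ≠ ⟨vl, ua⟩ ∧ w ≠ ⟨vl, va⟩} = n - 2 := by
      rw [Fintype.card_subtype]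
      have h1 : (Finset.univ.filter fun w : Σ i : Fin r, Fin (p i) =>
          w ≠ ⟨vl, ua⟩ ∧ w ≠ ⟨vl, va⟩) = Finset.univ \ {⟨vl, ua⟩, ⟨vl, va⟩} := by
        ext w
        simp [not_or]
      rw [h1, Finset.card_sdiff_of_subset (by simp), Finset.card_univ, Fintype.card_sigma]
      have h2 : ({⟨vl, ua⟩, ⟨vl, va⟩} : Finset (Σ i : Fin r, Fin (p i))).card = 2 :=
        Finset.card_pair huv
      simp only [Fintype.card_fin, h2]
      omega
    omega
  set F : (Σ i : Fin r, Fin (q i)) → {w : Σ i : Fin r, Fin (p i) // w ≠ ⟨vl, ua⟩ ∧ w ≠ ⟨vl, va⟩} :=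
    fun x => ⟨f x, hfne x⟩ with hF
  have hFbij : Function.Bijective F := by
    rw [Fintype.bijective_iff_injective_and_card]
    exact ⟨fun x y hxy => hfinj (congrArg Subtype.val hxy), hcards⟩
  set e := Equiv.ofBijective F hFbij with he
  rw [← Matrix.det_submatrix_equiv_self e]
  -- identify the matrix
  set c : Fin r → ℝ := fun i => (n : ℝ) - p i with hc
  have hmat : ((G.lapMatrix ℝ).submatrix
        (Subtype.val : {w : Σ i : Fin r, Fin (p i) // w ≠ ⟨vl, ua⟩ ∧ w ≠ ⟨vl, va⟩} →
          Σ i : Fin r, Fin (p i)) Subtype.val).submatrix e e =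
      Matrix.of fun x y : Σ i : Fin r, Fin (q i) =>
        (if x = y then c x.1 else 0) + (if x.1 = y.1 then 1 else 0) - 1 := by
    ext x y
    have hentry : ((G.lapMatrix ℝ).submatrix
        (Subtype.val : {w : Σ i : Fin r, Fin (p i) // w ≠ ⟨vl, ua⟩ ∧ w ≠ ⟨vl, va⟩} →
          Σ i : Fin r, Fin (p i)) Subtype.val).submatrix e e x y = G.lapMatrix ℝ (f x) (f y) := rfl
    rw [hentry]
    rw [SimpleGraph.lapMatrix, Matrix.sub_apply, SimpleGraph.degMatrix, Matrix.diagonal_apply,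
      SimpleGraph.adjMatrix_apply]
    have hadj : G.Adj (f x) (f y) ↔ ¬ (x.1 = y.1) := by
      rw [hG]
      constructor
      · intro h hc2
        exact h (by simp [hf, hc2]  : (f x).1 = (f y).1)
      · intro h hc2
        exact h hc2
    by_cases hxy : x = y
    · subst hxy
      rw [if_pos rfl, degAux]
      have : ¬ G.Adj (f x) (f x) := G.irrefl
      rw [if_neg this, Matrix.of_apply, if_pos rfl, if_pos rfl]
      have h5 : (f x).1 = x.1 := rfl
      rw [h5, hc]
      have h6 : p x.1 ≤ ∑ i, p i := by rw [← hn]; exact le_of_lt (hplt x.1)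
      rw [Nat.cast_sub h6, ← hn]
      ring
    · have hfxy : f x ≠ f y := fun h => hxy (hfinj h)
      rw [if_neg hfxy, Matrix.of_apply, if_neg hxy]
      by_cases hfst : x.1 = y.1
      · rw [if_neg (fun h => (hadj.1 h) hfst), if_pos hfst]
        ring
      · rw [if_pos (hadj.2 hfst), if_neg hfst]
        ring
  have hcast2 : ((p vl - 2 : ℕ) : ℝ) = (p vl : ℝ) - 2 := by
    rw [Nat.cast_sub hpl2]; norm_num
  have hcql : c vl + (q vl : ℝ) = (n : ℝ) - 2 := by
    rw [hql, hcast2]; simp only [hc]; ring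
  have hcqi : ∀ i, i ≠ vl → c i + (q i : ℝ) = (n : ℝ) := by
    intro i hi
    rw [hqne i hi]; simp only [hc]; ring
  have hcq : ∀ i, c i + (q i : ℝ) ≠ 0 := by
    intro i
    by_cases h : i = vl
    · rw [h, hcql]; exact hN2ne
    · rw [hcqi i h]; exact hNne
  rw [hmat, detAux2 q c hcne hcq]
  -- now pure algebra
  rw [← Finset.mul_prod_erase _ (fun i => c i ^ q i * (1 + (q i : ℝ) / c i)) (Finset.mem_univ vl),
      ← Finset.add_sum_erase _ (fun i => (q i : ℝ) / (c i + q i)) (Finset.mem_univ vl),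
      ← Finset.mul_prod_erase _ (fun i => c i ^ (p i - 1)) (Finset.mem_univ vl)]
  have hcard_erase : (Finset.univ.erase vl).card = r - 1 := by
    rw [Finset.card_erase_of_mem (Finset.mem_univ vl), Finset.card_univ, Fintype.card_fin]
  have hprod : ∏ i ∈ Finset.univ.erase vl, c i ^ q i * (1 + (q i : ℝ) / c i)
      = (n : ℝ) ^ (r - 1) * ∏ i ∈ Finset.univ.erase vl, c i ^ (p i - 1) := by
    have h1 : ∀ i ∈ Finset.univ.erase vl, c i ^ q i * (1 + (q i : ℝ) / c i)
        = (n : ℝ) * c i ^ (p i - 1) := by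
      intro i hi
      have hi' : i ≠ vl := Finset.ne_of_mem_erase hi
      rw [hqne i hi']
      have e1 : c i ^ p i = c i ^ (p i - 1) * c i := by
        rw [← pow_succ]
        congr 1
        have := hp i
        omega
      have e2 : c i * (1 + (p i : ℝ) / c i) = c i + p i := by
        rw [mul_add, mul_one, mul_div_cancel₀ _ (hcne i)]
      have e3 : c i + (p i : ℝ) = n := by simp only [hc]; ring
      rw [e1, mul_assoc, e2, e3]
      ring
    rw [Finset.prod_congr rfl h1, Finset.prod_mul_distrib, Finset.prod_const, hcard_erase]
  have hsum : ∑ i ∈ Finset.univ.erase vl, (q i : ℝ) / (c i + q i) = ((n : ℝ) - p vl) / n := by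
    have h1 : ∀ i ∈ Finset.univ.erase vl, (q i : ℝ) / (c i + q i) = (p i : ℝ) / n := by
      intro i hi
      have hi' : i ≠ vl := Finset.ne_of_mem_erase hi
      rw [hqne i hi', show c i + (p i : ℝ) = (n : ℝ) from by simp only [hc]; ring]
    rw [Finset.sum_congr rfl h1, ← Finset.sum_div]
    have hnat : p vl + ∑ i ∈ Finset.univ.erase vl, p i = n := by
      rw [hn, Finset.add_sum_erase _ p (Finset.mem_univ vl)]
    have hreal : (∑ i ∈ Finset.univ.erase vl, (p i : ℝ)) = (n : ℝ) - p vl := by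
      have h2 := congrArg (Nat.cast : ℕ → ℝ) hnat
      push_cast at h2
      linarith
    rw [hreal]
  simp only [hprod, hsum]
  have hql' : ((q vl : ℕ) : ℝ) = (p vl : ℝ) - 2 := by rw [hql, hcast2]
  have hpow1 : c vl ^ (p vl - 1) = c vl ^ (p vl - 2) * c vl := by
    rw [← pow_succ]
    congr 1
    omega
  have hpow2 : (n : ℝ) ^ (r - 1) = (n : ℝ) ^ (r - 2) * n := by
    rw [← pow_succ]
    congr 1
    omega
  rw [hcql, hql', hpow1, hpow2]
  have hqexp : q vl = p vl - 2 := hql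
  rw [hqexp]
  have hcvl : c vl = (n : ℝ) - p vl := by simp only [hc]
  rw [hcvl]
  have hAne : ((n:ℝ) - p vl) ≠ 0 := hcne vl
  field_simp
  ring
end

section
/- Let K_{p_1,…,p_r} (r ≥ 2) be the complete r-partite graph with parts V_1,…,V_r, n = p_1+⋯+p_r vertices and Laplacian L. If u ∈ V_i and v ∈ V_j with i ≠ j, then the resistance distance between u and v satisfies Ω(u,v) = det(L(u,v|u,v))/det(L(u|u)) = (n−1)(2n − p_i − p_j) / (n·(n − p_i)·(n − p_j)). -/
open BigOperators Matrix Finset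

lemma fiber_sum {V : Type*} [Fintype V] {r : ℕ} (c : V → Fin r) (k : Fin r → ℕ)
    (hk : ∀ l, (Finset.univ.filter fun w => c w = l).card = k l) (F : Fin r → ℝ) :
    ∑ w : V, F (c w) = ∑ m, (k m : ℝ) * F m := by
  classical
  rw [← Finset.sum_fiberwise' Finset.univ c F]
  refine Finset.sum_congr rfl fun m _ => ?_
  rw [Finset.sum_const, hk, nsmul_eq_mul]

lemma fiber_prod {V : Type*} [Fintype V] {r : ℕ} (c : V → Fin r) (k : Fin r → ℕ)
    (hk : ∀ l, (Finset.univ.filter fun w => c w = l).card = k l) (F : Fin r → ℝ) :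
    ∏ w : V, F (c w) = ∏ m, F m ^ (k m) := by
  classical
  rw [← Finset.prod_fiberwise' Finset.univ c F]
  refine Finset.prod_congr rfl fun m _ => ?_
  rw [Finset.prod_const, hk]

lemma det_key {V : Type*} [Fintype V] [DecidableEq V] {r : ℕ} (c : V → Fin r)
    (a : Fin r → ℝ) (ha : ∀ l, 0 < a l) (k : Fin r → ℕ)
    (hk : ∀ l, (Finset.univ.filter fun w => c w = l).card = k l)
    (hak : ∀ l, a l + (k l : ℝ) ≠ 0) :
    (Matrix.of fun w w' : V =>
      (if w = w' then a (c w) else 0) + (if c w = c w' then (1:ℝ) else 0) - 1).det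
      = (∏ l, a l ^ k l) * ((∏ l, (a l + k l) / a l) * (1 - ∑ l, (k l : ℝ) / (a l + k l))) := by
  classical
  have ha' : ∀ l, a l ≠ 0 := fun l => (ha l).ne'
  set χ : Fin r → (Fin r ⊕ Unit) → ℝ :=
    fun m x => Sum.elim (fun l => if m = l then (1:ℝ) else 0) (fun _ => 1) x with hχ
  set s : (Fin r ⊕ Unit) → ℝ := Sum.elim (fun _ => 1) (fun _ => -1) with hs
  set W : Matrix V (Fin r ⊕ Unit) ℝ := Matrix.of fun w x => χ (c w) x with hW
  set Sm : Matrix (Fin r ⊕ Unit) (Fin r ⊕ Unit) ℝ := Matrix.diagonal s with hSm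
  set D : Matrix V V ℝ := Matrix.diagonal (fun w => a (c w)) with hD
  set Dinv : Matrix V V ℝ := Matrix.diagonal (fun w => (a (c w))⁻¹) with hDinv
  have hDDinv : D * Dinv = 1 := by
    rw [hD, hDinv, Matrix.diagonal_mul_diagonal]
    have : (fun i => a (c i) * (a (c i))⁻¹) = fun _ : V => (1:ℝ) :=
      funext fun w => mul_inv_cancel₀ (ha' _)
    rw [this, Matrix.diagonal_one]
  -- step 1 : M = D + W * Sm * Wᵀ
  have hM : (Matrix.of fun w w' : V =>
      (if w = w' then a (c w) else 0) + (if c w = c w' then (1:ℝ) else 0) - 1)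
      = D + W * Sm * Wᵀ := by
    ext w w'
    have hws : (W * Sm * Wᵀ) w w' = (if c w = c w' then (1:ℝ) else 0) - 1 := by
      rw [Matrix.mul_assoc, Matrix.mul_apply]
      have hsw : ∀ x, (Sm * Wᵀ) x w' = s x * χ (c w') x := by
        intro x; rw [hSm, Matrix.diagonal_mul]; rfl
      simp only [hsw]
      simp only [hW, Matrix.of_apply]
      rw [Fintype.sum_sum_type]
      simp only [hχ, hs, Sum.elim_inl, Sum.elim_inr, Finset.univ_unique, Finset.sum_singleton]
      rw [Finset.sum_eq_single (c w)]
      · by_cases h : c w = c w' <;> simp [h, eq_comm] <;> ring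
      · intro b _ hb
        simp [Ne.symm hb]
      · simp
    simp only [Matrix.add_apply, Matrix.of_apply, hws, hD, Matrix.diagonal_apply]
    by_cases h : w = w' <;> simp [h] <;> ring
  rw [hM]
  have hfac : D + W * Sm * Wᵀ = D * (1 + (Dinv * W) * (Sm * Wᵀ)) := by
    rw [Matrix.mul_add, Matrix.mul_one, ← Matrix.mul_assoc D (Dinv * W) (Sm * Wᵀ),
      ← Matrix.mul_assoc D Dinv W, hDDinv, Matrix.one_mul, ← Matrix.mul_assoc W Sm Wᵀ]
  rw [hfac, Matrix.det_mul, Matrix.det_one_add_mul_comm]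
  have hdetD : D.det = ∏ l, a l ^ k l := by
    rw [hD, Matrix.det_diagonal]; exact fiber_prod c k hk a
  -- the small matrix
  have hT : (1 : Matrix (Fin r ⊕ Unit) (Fin r ⊕ Unit) ℝ) + (Sm * Wᵀ) * (Dinv * W)
      = Matrix.fromBlocks
          (Matrix.diagonal fun l => (a l + k l) / a l)
          (Matrix.of fun l (_ : Unit) => (k l : ℝ) / a l)
          (Matrix.of fun (_ : Unit) l => -((k l : ℝ) / a l))
          (Matrix.of fun (_ : Unit) (_ : Unit) => 1 - ∑ l, (k l : ℝ) / a l) := by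
    have h1 : ∀ x w, (Sm * Wᵀ) x w = s x * χ (c w) x := by
      intro x w; rw [hSm, Matrix.diagonal_mul]; rfl
    have h2 : ∀ w y, (Dinv * W) w y = (a (c w))⁻¹ * χ (c w) y := by
      intro w y; rw [hDinv, Matrix.diagonal_mul]; rfl
    have hprod : ∀ x y, ((Sm * Wᵀ) * (Dinv * W)) x y
        = s x * ∑ m, (k m : ℝ) * (χ m x * ((a m)⁻¹ * χ m y)) := by
      intro x y
      rw [Matrix.mul_apply]
      simp only [h1, h2]
      rw [← fiber_sum c k hk (fun m => χ m x * ((a m)⁻¹ * χ m y)), Finset.mul_sum]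
      exact Finset.sum_congr rfl fun w _ => by ring
    ext x y
    rw [Matrix.add_apply, hprod]
    cases x with
    | inl l =>
      cases y with
      | inl l' =>
        simp only [hχ, hs, Sum.elim_inl, Matrix.fromBlocks_apply₁₁, Matrix.one_apply,
          Matrix.diagonal_apply, Sum.inl.injEq]
        rw [Finset.sum_eq_single l ?h0 (by simp)]
        case h0 => intro b _ hb; simp [hb]
        by_cases h : l = l'
        · subst h
          simp only [if_pos rfl, if_true]
          rw [add_div, div_self (ha' l)]
          field_simp
        · simp [h]
      | inr _ =>
        simp only [hχ, hs, Sum.elim_inl, Sum.elim_inr, Matrix.fromBlocks_apply₁₂,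
          Matrix.one_apply, Matrix.of_apply]
        rw [Finset.sum_eq_single l ?h1 (by simp)]
        case h1 => intro b _ hb; simp [hb]
        simp [div_eq_mul_inv]
    | inr _ =>
      cases y with
      | inl l' =>
        simp only [hχ, hs, Sum.elim_inl, Sum.elim_inr, Matrix.fromBlocks_apply₂₁,
          Matrix.one_apply, Matrix.of_apply]
        rw [Finset.sum_eq_single l' ?h2 (by simp)]
        case h2 => intro b _ hb; simp [hb]
        simp [div_eq_mul_inv]
      | inr _ =>
        simp only [hχ, hs, Sum.elim_inr, Matrix.fromBlocks_apply₂₂,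
          Matrix.one_apply, Matrix.of_apply]
        rw [if_pos trivial, neg_one_mul, ← sub_eq_add_neg]
        congr 1
        refine Finset.sum_congr rfl fun m _ => ?_
        rw [div_eq_mul_inv]
        ring
  rw [hT]
  -- Schur complement
  letI hf : Invertible (fun l => (a l + (k l : ℝ)) / a l) :=
    { invOf := fun l => a l / (a l + (k l : ℝ))
      invOf_mul_self := by
        funext l
        simp only [Pi.mul_apply, Pi.one_apply]
        rw [div_mul_div_comm, mul_comm, div_self (mul_ne_zero (hak l) (ha' l))]
      mul_invOf_self := by
        funext l
        simp only [Pi.mul_apply, Pi.one_apply]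
        rw [div_mul_div_comm, mul_comm (a l), div_self (mul_ne_zero (hak l) (ha' l))] }
  letI := Matrix.diagonalInvertible (fun l => (a l + (k l : ℝ)) / a l)
  rw [Matrix.det_fromBlocks₁₁, Matrix.invOf_diagonal_eq]
  have hg : (⅟(fun l => (a l + (k l : ℝ)) / a l) : Fin r → ℝ)
      = fun l => a l / (a l + (k l : ℝ)) := rfl
  rw [hg, hdetD, Matrix.det_diagonal]
  congr 1
  congr 1
  rw [Matrix.det_unique, Matrix.sub_apply, Matrix.of_apply]
  have hC : (Matrix.of (fun (_ : Unit) l => -((k l : ℝ) / a l))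
      * Matrix.diagonal (fun l => a l / (a l + (k l : ℝ)))
      * Matrix.of (fun l (_ : Unit) => (k l : ℝ) / a l)) default default
      = ∑ l, -((k l : ℝ) / a l) * (a l / (a l + (k l : ℝ))) * ((k l : ℝ) / a l) := by
    rw [Matrix.mul_apply]
    refine Finset.sum_congr rfl fun l _ => ?_
    rw [Matrix.mul_diagonal]
    rfl
  rw [hC, sub_sub, ← Finset.sum_add_distrib]
  congr 1
  refine Finset.sum_congr rfl fun l _ => ?_
  have h1 : a l ≠ 0 := ha' l
  have h2 : a l + (k l : ℝ) ≠ 0 := hak l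
  field_simp
  ring

-- card of a fiber in a sigma type of Fins
lemma card_fiber {r : ℕ} (p : Fin r → ℕ) (m : Fin r) :
    (Finset.univ.filter fun x : Σ l : Fin r, Fin (p l) => x.1 = m).card = p m := by
  classical
  rw [← Fintype.card_subtype]
  refine Eq.trans (Fintype.card_congr ?_) (Fintype.card_fin (p m))
  exact {
    toFun := fun x => x.2 ▸ x.1.2
    invFun := fun y => ⟨⟨m, y⟩, rfl⟩
    left_inv := by rintro ⟨⟨l, y⟩, rfl⟩; rfl
    right_inv := fun y => rfl }

lemma card_filter_subtype {α : Type*} [Fintype α] [DecidableEq α]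
    (P Q : α → Prop) [DecidablePred P] [DecidablePred Q] :
    (Finset.univ.filter fun w : {x // P x} => Q w.1).card
      = (Finset.univ.filter fun x => P x ∧ Q x).card := by
  classical
  rw [← Fintype.card_subtype, ← Fintype.card_subtype]
  exact Fintype.card_congr (Equiv.subtypeSubtypeEquivSubtypeInter P Q)

lemma card_filter_erase {α : Type*} [Fintype α] [DecidableEq α]
    (Q : α → Prop) [DecidablePred Q] (u : α) :
    (Finset.univ.filter fun x => x ≠ u ∧ Q x).card
      = (Finset.univ.filter fun x => Q x).card - (if Q u then 1 else 0) := by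
  classical
  have h1 : (Finset.univ.filter fun x => x ≠ u ∧ Q x)
      = (Finset.univ.filter fun x => Q x).erase u := by
    rw [← Finset.filter_ne']
    rw [Finset.filter_filter]
    exact Finset.filter_congr fun x _ => by tauto
  rw [h1]
  by_cases hQ : Q u
  · rw [Finset.card_erase_of_mem (by simp [hQ]), if_pos hQ]
  · rw [Finset.erase_eq_of_notMem (by simp [hQ]), if_neg hQ, Nat.sub_zero]

lemma lap_entry {r : ℕ} (p : Fin r → ℕ) (n : ℕ) (hn : n = ∑ i, p i)
    (x y : Σ l : Fin r, Fin (p l)) :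
    (SimpleGraph.completeMultipartiteGraph fun i : Fin r => Fin (p i)).lapMatrix ℝ x y
      = (if x = y then ((n : ℝ) - p x.1) else 0) + (if x.1 = y.1 then 1 else 0) - 1 := by
  classical
  set G := SimpleGraph.completeMultipartiteGraph fun i : Fin r => Fin (p i) with hG
  have hcard : Fintype.card (Σ l : Fin r, Fin (p l)) = n := by
    rw [hn]; simp [Fintype.card_sigma]
  have hpn : p x.1 ≤ n := by
    rw [hn]
    exact Finset.single_le_sum (f := p) (fun _ _ => Nat.zero_le _) (Finset.mem_univ x.1)
  have hdeg : G.degree x = n - p x.1 := by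
    rw [← SimpleGraph.card_neighborFinset_eq_degree]
    have : G.neighborFinset x = Finset.univ \ (Finset.univ.filter fun y => y.1 = x.1) := by
      ext z
      simp [SimpleGraph.mem_neighborFinset, hG, ne_comm]
    rw [this, Finset.card_sdiff_of_subset (Finset.filter_subset _ _)]
    rw [card_fiber p x.1, Finset.card_univ, hcard]
  have hadj : ∀ z w : Σ l : Fin r, Fin (p l), G.Adj z w ↔ z.1 ≠ w.1 := fun z w => Iff.rfl
  rw [SimpleGraph.lapMatrix, Matrix.sub_apply, SimpleGraph.degMatrix, SimpleGraph.adjMatrix]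
  rw [Matrix.diagonal_apply]
  by_cases h : x = y
  · subst h
    rw [if_pos rfl, if_pos rfl, if_pos rfl, hdeg]
    rw [Matrix.of_apply, if_neg (G.loopless.irrefl x), Nat.cast_sub hpn]
    ring
  · rw [if_neg h, if_neg h]
    by_cases h2 : x.1 = y.1
    · have hna : ¬ G.Adj x y := by rw [hadj]; simpa using h2
      rw [Matrix.of_apply, if_neg hna, if_pos h2]
      ring
    · have hna : G.Adj x y := by rw [hadj]; exact h2
      rw [Matrix.of_apply, if_pos hna, if_neg h2]
      ring

set_option maxHeartbeats 1000000 in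
/-- In the complete multipartite graph `K_{p₁,…,p_r}` (`r ≥ 2`) with Laplacian `L`,
for `u ∈ V_i`, `v ∈ V_j` with `i ≠ j`, the resistance distance
`Ω(u,v) = det(L(u,v|u,v)) / det(L(u|u)) = (n−1)(2n−pᵢ−pⱼ)/(n(n−pᵢ)(n−pⱼ))`. -/
theorem resistance_distance_different_parts
    (r : ℕ) (hr : 2 ≤ r) (p : Fin r → ℕ) (hp : ∀ i, 1 ≤ p i)
    (n : ℕ) (hn : n = ∑ i, p i)
    (L : Matrix (Σ i : Fin r, Fin (p i)) (Σ i : Fin r, Fin (p i)) ℝ)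
    (hL : L = (SimpleGraph.completeMultipartiteGraph fun i : Fin r => Fin (p i)).lapMatrix ℝ)
    (u v : Σ i : Fin r, Fin (p i)) (i j : Fin r)
    (hu : u.1 = i) (hv : v.1 = j) (hij : i ≠ j) :
    Matrix.det
        (L.submatrix
          (Subtype.val : {w : Σ i : Fin r, Fin (p i) // w ≠ u ∧ w ≠ v} → Σ i : Fin r, Fin (p i))
          Subtype.val) /
      Matrix.det
        (L.submatrix
          (Subtype.val : {w : Σ i : Fin r, Fin (p i) // w ≠ u} → Σ i : Fin r, Fin (p i))
          Subtype.val) =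
      ((n : ℝ) - 1) * (2 * (n : ℝ) - p i - p j) /
        ((n : ℝ) * ((n : ℝ) - p i) * ((n : ℝ) - p j)) := by
  classical
  subst hL
  -- basic facts
  have huv : u ≠ v := by intro h; exact hij (by rw [← hu, ← hv, h])
  have hpn : ∀ m : Fin r, p m + 1 ≤ n := by
    intro m
    obtain ⟨m', hm'⟩ := Fintype.exists_ne_of_one_lt_card (by simp; omega) m
    have h2 : p m + p m' ≤ ∑ l, p l := by
      rw [← Finset.sum_pair (Ne.symm hm')]
      exact Finset.sum_le_sum_of_subset (Finset.subset_univ _)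
    have := hp m'
    omega
  have hn2 : 2 ≤ n := by have := hpn i; have := hp i; omega
  have hn2R : (2:ℝ) ≤ (n:ℝ) := by exact_mod_cast hn2
  have hpnR : ∀ m, (p m : ℝ) + 1 ≤ (n:ℝ) := fun m => by exact_mod_cast hpn m
  set a : Fin r → ℝ := fun l => (n : ℝ) - p l with ha_def
  have ha : ∀ l, 0 < a l := fun l => by
    have := hpnR l; simp only [ha_def]; linarith
  have ha' : ∀ l, a l ≠ 0 := fun l => (ha l).ne'
  set k1 : Fin r → ℕ := fun l => p l - (if l = i then 1 else 0) - (if l = j then 1 else 0)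
    with hk1_def
  set k2 : Fin r → ℕ := fun l => p l - (if l = i then 1 else 0) with hk2_def
  -- cast facts
  have hk1c : ∀ l, (k1 l : ℝ)
      = (p l : ℝ) - (if l = i then 1 else 0) - (if l = j then 1 else 0) := by
    intro l
    have h1 := hp l
    simp only [hk1_def]
    rcases eq_or_ne l i with h | h <;> rcases eq_or_ne l j with h' | h' <;>
      simp [h, h', hij, Ne.symm hij] <;> (rw [Nat.cast_sub (hp _)]; norm_num)
  have hk2c : ∀ l, (k2 l : ℝ) = (p l : ℝ) - (if l = i then 1 else 0) := by
    intro l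
    have h1 := hp l
    simp only [hk2_def]
    rcases eq_or_ne l i with h | h <;> simp [h]
    rw [Nat.cast_sub (hp _)]; norm_num
  have hak1 : ∀ l, a l + (k1 l : ℝ)
      = (n:ℝ) - (if l = i then 1 else 0) - (if l = j then 1 else 0) := by
    intro l; rw [hk1c l]; simp only [ha_def]; ring
  have hak2 : ∀ l, a l + (k2 l : ℝ) = (n:ℝ) - (if l = i then 1 else 0) := by
    intro l; rw [hk2c l]; simp only [ha_def]; ring
  have hak1pos : ∀ l, 0 < a l + (k1 l : ℝ) := by
    intro l
    rw [hak1 l]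
    rcases eq_or_ne l i with h | h <;> rcases eq_or_ne l j with h' | h' <;>
      simp [h, h', hij, Ne.symm hij] <;> linarith
  have hak2pos : ∀ l, 0 < a l + (k2 l : ℝ) := by
    intro l
    rw [hak2 l]
    rcases eq_or_ne l i with h | h <;> simp [h, hij, Ne.symm hij] <;> linarith
  have flip : ∀ m m' : Fin r, (if m = m' then 1 else 0 : ℕ) = (if m' = m then 1 else 0) := by
    intro m m'
    rcases eq_or_ne m m' with h | h
    · simp [h]
    · simp [h, Ne.symm h]
  -- the card computations
  have hcard1 : ∀ l, (Finset.univ.filter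
      fun w : {x : Σ m : Fin r, Fin (p m) // x ≠ u} => w.1.1 = l).card = k2 l := by
    intro l
    rw [card_filter_subtype (fun x => x ≠ u) (fun x => x.1 = l),
      card_filter_erase (fun x : Σ m : Fin r, Fin (p m) => x.1 = l) u,
      card_fiber p l, hu]
    simp only [hk2_def]
    rw [flip i l]
  have hcard2 : ∀ l, (Finset.univ.filter
      fun w : {x : Σ m : Fin r, Fin (p m) // x ≠ u ∧ x ≠ v} => w.1.1 = l).card = k1 l := by
    intro l
    rw [card_filter_subtype (fun x => x ≠ u ∧ x ≠ v) (fun x => x.1 = l)]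
    have hre : (Finset.univ.filter fun x : Σ m : Fin r, Fin (p m) =>
        (x ≠ u ∧ x ≠ v) ∧ x.1 = l)
        = Finset.univ.filter fun x => x ≠ u ∧ (x ≠ v ∧ x.1 = l) := by
      apply Finset.filter_congr; intro x _; tauto
    rw [hre, card_filter_erase (fun x : Σ m : Fin r, Fin (p m) => x ≠ v ∧ x.1 = l) u,
      card_filter_erase (fun x : Σ m : Fin r, Fin (p m) => x.1 = l) v,
      card_fiber p l, hu, hv]
    have hpj := hp j
    have hpi := hp i
    simp only [hk1_def, ne_eq, huv, not_false_eq_true, true_and]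
    rw [flip i l, flip j l]
    rcases eq_or_ne l i with h | h <;> rcases eq_or_ne l j with h' | h' <;>
      simp [h, h'] <;> omega
  -- determinant computations
  have hsub : ∀ (P : (Σ m : Fin r, Fin (p m)) → Prop) [DecidablePred P],
      ((SimpleGraph.completeMultipartiteGraph fun m : Fin r => Fin (p m)).lapMatrix
        ℝ).submatrix (Subtype.val : {w // P w} → _) Subtype.val
      = Matrix.of fun w w' : {w // P w} =>
          (if w = w' then a w.1.1 else 0) + (if w.1.1 = w'.1.1 then (1:ℝ) else 0) - 1 := by
    intro P _
    ext w w'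
    rw [Matrix.submatrix_apply, lap_entry p n hn, Matrix.of_apply]
    congr 2
    exact if_congr Subtype.val_inj rfl rfl
  have hdet2 : (((SimpleGraph.completeMultipartiteGraph fun m : Fin r =>
      Fin (p m)).lapMatrix ℝ).submatrix
        (Subtype.val : {w : Σ m : Fin r, Fin (p m) // w ≠ u} → _) Subtype.val).det
      = (∏ l, a l ^ k2 l) *
        ((∏ l, (a l + k2 l) / a l) * (1 - ∑ l, (k2 l : ℝ) / (a l + k2 l))) := by
    rw [hsub (fun w => w ≠ u)]
    exact det_key (fun w : {x : Σ m : Fin r, Fin (p m) // x ≠ u} => w.1.1) a ha k2 hcard1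
      (fun l => (hak2pos l).ne')
  have hdet1 : (((SimpleGraph.completeMultipartiteGraph fun m : Fin r =>
      Fin (p m)).lapMatrix ℝ).submatrix
        (Subtype.val : {w : Σ m : Fin r, Fin (p m) // w ≠ u ∧ w ≠ v} → _) Subtype.val).det
      = (∏ l, a l ^ k1 l) *
        ((∏ l, (a l + k1 l) / a l) * (1 - ∑ l, (k1 l : ℝ) / (a l + k1 l))) := by
    rw [hsub (fun w => w ≠ u ∧ w ≠ v)]
    exact det_key (fun w : {x : Σ m : Fin r, Fin (p m) // x ≠ u ∧ x ≠ v} => w.1.1) a ha k1 hcard2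
      (fun l => (hak1pos l).ne')
  rw [hdet1, hdet2]
  -- product relations
  have hP : (∏ l, a l ^ k2 l) = (∏ l, a l ^ k1 l) * a j := by
    rw [← Finset.prod_erase_mul Finset.univ _ (Finset.mem_univ j),
        ← Finset.prod_erase_mul Finset.univ (fun l => a l ^ k1 l) (Finset.mem_univ j)]
    have he : (∏ l ∈ Finset.univ.erase j, a l ^ k2 l)
        = ∏ l ∈ Finset.univ.erase j, a l ^ k1 l := by
      refine Finset.prod_congr rfl fun l hl => ?_
      have hlj : l ≠ j := Finset.ne_of_mem_erase hl
      have hkk : k2 l = k1 l := by simp [hk1_def, hk2_def, hlj]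
      rw [hkk]
    rw [he, mul_assoc]
    congr 1
    have h1 : k2 j = k1 j + 1 := by
      have h2 : k1 j = p j - 1 := by simp [hk1_def, Ne.symm hij]
      have h3 : k2 j = p j := by simp [hk2_def, Ne.symm hij]
      have := hp j
      omega
    rw [h1, pow_succ]
  have hQ : (∏ l, (a l + (k2 l : ℝ)) / a l) * ((n:ℝ) - 1)
      = (∏ l, (a l + (k1 l : ℝ)) / a l) * n := by
    rw [← Finset.prod_erase_mul Finset.univ _ (Finset.mem_univ j),
        ← Finset.prod_erase_mul Finset.univ (fun l => (a l + (k1 l : ℝ)) / a l)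
          (Finset.mem_univ j)]
    have he : (∏ l ∈ Finset.univ.erase j, (a l + (k2 l : ℝ)) / a l)
        = ∏ l ∈ Finset.univ.erase j, (a l + (k1 l : ℝ)) / a l := by
      refine Finset.prod_congr rfl fun l hl => ?_
      have hlj : l ≠ j := Finset.ne_of_mem_erase hl
      have hkk : k2 l = k1 l := by simp [hk1_def, hk2_def, hlj]
      rw [hkk]
    have h2 : a j + (k2 j : ℝ) = n := by
      rw [hak2 j, if_neg (Ne.symm hij)]; ring
    have h1 : a j + (k1 j : ℝ) = (n:ℝ) - 1 := by
      rw [hak1 j, if_neg (Ne.symm hij), if_pos rfl]; ring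
    rw [he, h1, h2]
    ring
  -- sum computations
  have hcastn : ((n:ℕ):ℝ) = ∑ l, (p l : ℝ) := by rw [hn]; push_cast; rfl
  have hsum_erase_i : ∑ l ∈ Finset.univ.erase i, (p l : ℝ) = (n:ℝ) - p i := by
    have h0 : (p i : ℝ) + ∑ l ∈ Finset.univ.erase i, (p l : ℝ) = ∑ l, (p l : ℝ) :=
      Finset.add_sum_erase _ (fun l => ((p l : ℕ) : ℝ)) (Finset.mem_univ i)
    linarith [hcastn]
  have hji : j ∈ Finset.univ.erase i :=
    Finset.mem_erase.mpr ⟨Ne.symm hij, Finset.mem_univ j⟩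
  have hsum_erase_ij : ∑ l ∈ (Finset.univ.erase i).erase j, (p l : ℝ)
      = (n:ℝ) - p i - p j := by
    have h0 : (p j : ℝ) + ∑ l ∈ (Finset.univ.erase i).erase j, (p l : ℝ)
        = ∑ l ∈ Finset.univ.erase i, (p l : ℝ) :=
      Finset.add_sum_erase _ (fun l => ((p l : ℕ) : ℝ)) hji
    linarith [hsum_erase_i]
  have hS2 : ∑ l, (k2 l : ℝ) / (a l + k2 l)
      = ((p i : ℝ) - 1) / ((n:ℝ) - 1) + ((n:ℝ) - p i) / n := by
    rw [← Finset.add_sum_erase _ _ (Finset.mem_univ i)]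
    congr 1
    · rw [hak2 i, hk2c i, if_pos rfl]
    · have hterm : ∀ l ∈ Finset.univ.erase i,
          (k2 l : ℝ) / (a l + k2 l) = (p l : ℝ) / n := by
        intro l hl
        have hli : l ≠ i := Finset.ne_of_mem_erase hl
        rw [hak2 l, hk2c l, if_neg hli]
        norm_num
      rw [Finset.sum_congr rfl hterm, ← Finset.sum_div, hsum_erase_i]
  have hS1 : ∑ l, (k1 l : ℝ) / (a l + k1 l)
      = ((p i : ℝ) - 1) / ((n:ℝ) - 1)
        + (((p j : ℝ) - 1) / ((n:ℝ) - 1) + ((n:ℝ) - p i - p j) / n) := by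
    rw [← Finset.add_sum_erase _ _ (Finset.mem_univ i)]
    congr 1
    · rw [hak1 i, hk1c i, if_pos rfl, if_neg hij]
      norm_num
    · rw [← Finset.add_sum_erase _ _ hji]
      congr 1
      · rw [hak1 j, hk1c j, if_neg (Ne.symm hij), if_pos rfl]
        norm_num
      · have hterm : ∀ l ∈ (Finset.univ.erase i).erase j,
            (k1 l : ℝ) / (a l + k1 l) = (p l : ℝ) / n := by
          intro l hl
          have hlj : l ≠ j := Finset.ne_of_mem_erase hl
          have hli : l ≠ i := Finset.ne_of_mem_erase (Finset.mem_of_mem_erase hl)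
          rw [hak1 l, hk1c l, if_neg hli, if_neg hlj]
          norm_num
        rw [Finset.sum_congr rfl hterm, ← Finset.sum_div, hsum_erase_ij]
  -- positivity facts
  have hQ1pos : 0 < ∏ l, (a l + (k1 l : ℝ)) / a l :=
    Finset.prod_pos fun l _ => div_pos (hak1pos l) (ha l)
  have hP1pos : 0 < ∏ l, a l ^ k1 l := Finset.prod_pos fun l _ => pow_pos (ha l) _
  have hnpos : (0:ℝ) < n := by linarith
  have hn1pos : (0:ℝ) < (n:ℝ) - 1 := by linarith
  have hai : (0:ℝ) < (n:ℝ) - p i := by have := hpnR i; linarith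
  have haj : (0:ℝ) < (n:ℝ) - p j := by have := hpnR j; linarith
  have hQ2 : (∏ l, (a l + (k2 l : ℝ)) / a l)
      = (∏ l, (a l + (k1 l : ℝ)) / a l) * n / ((n:ℝ) - 1) := by
    rw [eq_div_iff hn1pos.ne']
    exact hQ
  have e1 : 1 - (((p i : ℝ) - 1) / ((n:ℝ) - 1)
        + (((p j : ℝ) - 1) / ((n:ℝ) - 1) + ((n:ℝ) - p i - p j) / n))
      = (2*(n:ℝ) - p i - p j) / ((n:ℝ) * ((n:ℝ) - 1)) := by
    field_simp
    ring
  have e2 : 1 - (((p i : ℝ) - 1) / ((n:ℝ) - 1) + ((n:ℝ) - p i) / n)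
      = ((n:ℝ) - p i) / ((n:ℝ) * ((n:ℝ) - 1)) := by
    field_simp
    ring
  set P1 := ∏ l, a l ^ k1 l with hP1def
  set Q1 := ∏ l, (a l + (k1 l : ℝ)) / a l with hQ1def
  rw [hS1, hS2, hP, hQ2, e1, e2]
  have hajj : a j = (n:ℝ) - p j := rfl
  rw [hajj]
  have hLden : (P1 * ((n:ℝ) - p j)) *
      ((Q1 * (n:ℝ) / ((n:ℝ) - 1)) * (((n:ℝ) - p i) / ((n:ℝ) * ((n:ℝ) - 1)))) ≠ 0 :=
    ne_of_gt (mul_pos (mul_pos hP1pos haj)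
      (mul_pos (div_pos (mul_pos hQ1pos hnpos) hn1pos)
        (div_pos hai (mul_pos hnpos hn1pos))))
  have hRden : (n:ℝ) * ((n:ℝ) - p i) * ((n:ℝ) - p j) ≠ 0 :=
    ne_of_gt (mul_pos (mul_pos hnpos hai) haj)
  rw [div_eq_div_iff hLden hRden]
  field_simp
end

section
/- Let K_{p_1,…,p_r} (r ≥ 2) be the complete r-partite graph with parts V_1,…,V_r, n = p_1+⋯+p_r vertices and Laplacian L. If u and v are distinct vertices in the same part V_i (so p_i ≥ 2), then the resistance distance between u and v satisfies Ω(u,v) = det(L(u,v|u,v))/det(L(u|u)) = 2/(n − p_i). -/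
open BigOperators

open Finset Matrix


open BigOperators Finset Matrix

lemma cm_degree (r : ℕ) (p : Fin r → ℕ) (w : Σ i : Fin r, Fin (p i)) :
    (SimpleGraph.completeMultipartiteGraph fun i : Fin r => Fin (p i)).degree w
      = (∑ j, p j) - p w.1 := by
  classical
  have h1 : (SimpleGraph.completeMultipartiteGraph fun i : Fin r => Fin (p i)).degree w
      = (Finset.univ.filter fun x : Σ i : Fin r, Fin (p i) => w.1 ≠ x.1).card := by
    rw [SimpleGraph.degree]
    congr 1
    ext x
    simp [SimpleGraph.mem_neighborFinset]
  rw [h1, Finset.card_filter, ← Finset.univ_sigma_univ, Finset.sum_sigma]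
  have h2 : ∀ j : Fin r, (∑ _a : Fin (p j), if w.1 ≠ j then (1:ℕ) else 0)
      = if w.1 ≠ j then p j else 0 := by
    intro j; split <;> simp
  simp_rw [h2]
  have hf : (Finset.univ.filter fun j => w.1 ≠ j) = Finset.univ.erase w.1 := by
    ext j; simp [ne_comm]
  have h3 : (∑ j, if w.1 ≠ j then p j else 0) = ∑ j ∈ Finset.univ.erase w.1, p j := by
    rw [← Finset.sum_filter, hf]
  rw [h3]
  have h4 := Finset.sum_erase_add Finset.univ p (Finset.mem_univ w.1)
  omega

lemma cm_lap_apply (r : ℕ) (p : Fin r → ℕ) (w w' : Σ i : Fin r, Fin (p i)) :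
    (SimpleGraph.completeMultipartiteGraph fun i : Fin r => Fin (p i)).lapMatrix ℝ w w'
      = (if w = w' then (((∑ j, p j) - p w.1 : ℕ) : ℝ) else 0)
        - (if w.1 ≠ w'.1 then 1 else 0) := by
  classical
  simp [SimpleGraph.lapMatrix, SimpleGraph.degMatrix, SimpleGraph.adjMatrix, cm_degree,
    Matrix.sub_apply, Matrix.of_apply, Matrix.diagonal_apply]

lemma cm_eigen (r : ℕ) (p : Fin r → ℕ) (u v : Σ i : Fin r, Fin (p i)) (i : Fin r)
    (hu : u.1 = i) (hv : v.1 = i) (huv : u ≠ v) (w : Σ i : Fin r, Fin (p i)) :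
    (SimpleGraph.completeMultipartiteGraph fun i : Fin r => Fin (p i)).lapMatrix ℝ w v
      - (SimpleGraph.completeMultipartiteGraph fun i : Fin r => Fin (p i)).lapMatrix ℝ w u
      = (((∑ j, p j) - p i : ℕ) : ℝ) * ((Pi.single v 1 - Pi.single u 1 : (Σ i : Fin r, Fin (p i)) → ℝ) w) := by
  classical
  rw [cm_lap_apply, cm_lap_apply]
  by_cases hwv : w = v
  · subst hwv
    simp [hu, hv, huv, Ne.symm huv, Pi.single_apply]
  · by_cases hwu : w = u
    · subst hwu
      simp [hu, hv, huv, Ne.symm huv, Pi.single_apply]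
    · by_cases hwi : w.1 = i
      · simp [Pi.single_apply, hwv, hwu, hwi, hu, hv]
      · simp [Pi.single_apply, hwv, hwu, hu, hv, hwi]

lemma cm_mulvec (r : ℕ) (p : Fin r → ℕ) (u v : Σ i : Fin r, Fin (p i)) (i : Fin r)
    (hu : u.1 = i) (hv : v.1 = i) (huv : u ≠ v)
    (hm : ((((∑ j, p j) - p i : ℕ)) : ℝ) ≠ 0) :
    (SimpleGraph.completeMultipartiteGraph fun i : Fin r => Fin (p i)).lapMatrix ℝ *ᵥ
      (fun w => (1 + (Pi.single v 1 - Pi.single u 1 : (Σ i : Fin r, Fin (p i)) → ℝ) w)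
        / (((∑ j, p j) - p i : ℕ) : ℝ))
      = (Pi.single v 1 - Pi.single u 1 : (Σ i : Fin r, Fin (p i)) → ℝ) := by
  classical
  set G := SimpleGraph.completeMultipartiteGraph fun i : Fin r => Fin (p i) with hG
  set m : ℝ := (((∑ j, p j) - p i : ℕ) : ℝ) with hmdef
  set s : (Σ i : Fin r, Fin (p i)) → ℝ := (Pi.single v 1 - Pi.single u 1) with hs
  have hz : (fun w => (1 + s w) / m) = m⁻¹ • ((fun _ => (1:ℝ)) + s) := by
    funext w; simp [div_eq_inv_mul, Pi.smul_apply, smul_eq_mul, mul_add]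
  rw [hz, Matrix.mulVec_smul, Matrix.mulVec_add, SimpleGraph.lapMatrix_mulVec_const_eq_zero,
    zero_add]
  have hseig : G.lapMatrix ℝ *ᵥ s = m • s := by
    funext w
    have h1 : (G.lapMatrix ℝ *ᵥ s) w = G.lapMatrix ℝ w v - G.lapMatrix ℝ w u := by
      rw [hs, Matrix.mulVec_sub]
      simp [Matrix.mulVec_single]
    rw [h1, cm_eigen r p u v i hu hv huv w]
    simp [hs, Pi.smul_apply, smul_eq_mul, hmdef]
  rw [hseig, smul_smul, inv_mul_cancel₀ hm, one_smul]

lemma sum_subtype_ne {α : Type*} [Fintype α] [DecidableEq α] (u : α) (f : α → ℝ) :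
    (∑ w : {w : α // w ≠ u}, f w.val) + f u = ∑ w, f w := by
  classical
  rw [← Finset.sum_subtype (Finset.univ.erase u) (fun x => by simp) f]
  exact Finset.sum_erase_add _ _ (Finset.mem_univ u)

lemma cm_posdef (r : ℕ) (hr : 2 ≤ r) (p : Fin r → ℕ) (hp : ∀ i, 1 ≤ p i)
    (u : Σ i : Fin r, Fin (p i)) :
    (((SimpleGraph.completeMultipartiteGraph fun i : Fin r => Fin (p i)).lapMatrix ℝ).submatrix
      (Subtype.val : {w : Σ i : Fin r, Fin (p i) // w ≠ u} → Σ i : Fin r, Fin (p i))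
      Subtype.val).PosDef := by
  classical
  set G := SimpleGraph.completeMultipartiteGraph fun i : Fin r => Fin (p i) with hG
  set L := G.lapMatrix ℝ with hLdef
  have hsym : L.IsSymm := G.isSymm_lapMatrix (R := ℝ)
  rw [Matrix.posDef_iff_dotProduct_mulVec]
  constructor
  · ext a b
    simp only [Matrix.conjTranspose_apply, Matrix.submatrix_apply, star_trivial]
    exact hsym.apply _ _
  · intro x hx
    set y : (Σ i : Fin r, Fin (p i)) → ℝ := fun w => if h : w = u then 0 else x ⟨w, h⟩ with hy
    have hyu : y u = 0 := by simp [hy]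
    have hyv : ∀ w : {w : Σ i : Fin r, Fin (p i) // w ≠ u}, y w.val = x w := by
      intro w; simp [hy, w.2]
    have hinner : ∀ w : {w : Σ i : Fin r, Fin (p i) // w ≠ u},
        ((L.submatrix Subtype.val Subtype.val) *ᵥ x) w = (L *ᵥ y) w.val := by
      intro w
      simp only [Matrix.mulVec, dotProduct, Matrix.submatrix_apply]
      rw [← sum_subtype_ne u (fun w' => L w.val w' * y w')]
      simp only [hyu, mul_zero, add_zero]
      exact Finset.sum_congr rfl fun w' _ => by rw [hyv]
    have hquad : dotProduct x ((L.submatrix Subtype.val Subtype.val) *ᵥ x)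
        = dotProduct y (L *ᵥ y) := by
      simp only [dotProduct]
      rw [← sum_subtype_ne u (fun w' => y w' * (L *ᵥ y) w')]
      simp only [hyu, zero_mul, add_zero]
      exact Finset.sum_congr rfl fun w' _ => by rw [hyv, hinner]
    have hge : 0 ≤ dotProduct y (L *ᵥ y) := by
      have := (SimpleGraph.posSemidef_lapMatrix ℝ G).dotProduct_mulVec_nonneg y
      simpa using this
    rw [star_trivial, hquad]
    rcases lt_or_eq_of_le hge with h | h
    · exact h
    · exfalso
      have hzero : ∀ a b, G.Adj a b → y a = y b := by
        rw [← SimpleGraph.lapMatrix_toLinearMap₂'_apply'_eq_zero_iff_forall_adj]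
        rw [Matrix.toLinearMap₂'_apply']
        exact h.symm
      haveI : Nontrivial (Fin r) := by
        refine ⟨⟨0, by omega⟩, ⟨1, by omega⟩, ?_⟩
        simp [Fin.ext_iff]
      obtain ⟨j, hj⟩ := exists_ne u.1
      have hadj : ∀ a b : Σ i : Fin r, Fin (p i), a.1 ≠ b.1 → G.Adj a b := by
        intro a b h'
        simpa [hG] using h'
      set z0 : Σ i : Fin r, Fin (p i) := ⟨j, ⟨0, hp j⟩⟩ with hz0
      have hz0u : y z0 = y u := hzero _ _ (hadj _ _ hj)
      have hwall : ∀ w, y w = 0 := by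
        intro w
        by_cases hw : w.1 = u.1
        · have h1 : y w = y z0 := hzero _ _ (hadj _ _ (by rw [hw]; exact fun hq => hj (by simpa [hz0] using hq.symm)))
          rw [h1, hz0u, hyu]
        · have h1 : y w = y u := hzero _ _ (hadj _ _ hw)
          rw [h1, hyu]
      apply hx
      funext w
      have := hwall w.val
      rw [hyv] at this
      simpa using this

lemma det_updateColumn_single {β : Type*} [Fintype β] [DecidableEq β]
    (N : Matrix β β ℝ) (v' : β) :
    (N.updateCol v' (Pi.single v' 1)).det
      = (N.submatrix (Subtype.val : {a : β // ¬ a = v'} → β) Subtype.val).det := by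
  set M := N.updateCol v' (Pi.single v' 1) with hM
  have hblk : ∀ a : β, ¬ (a = v') → ∀ b : β, (b = v') → M a b = 0 := by
    intro a ha b hb
    subst hb
    simp [hM, Matrix.updateCol_apply, Pi.single_apply, ha]
  have h := Matrix.twoBlockTriangular_det M (· = v') hblk
  haveI : Subsingleton {a : β // a = v'} := ⟨fun x y => Subtype.ext (x.2.trans y.2.symm)⟩
  rw [h, @Matrix.det_eq_elem_of_subsingleton {a : β // a = v'} Subtype.instDecidableEq (Subtype.fintype _) ℝ _ this _ ⟨v', rfl⟩]
  have h1 : M.toSquareBlockProp (· = v') ⟨v', rfl⟩ ⟨v', rfl⟩ = 1 := by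
    simp [hM, Matrix.toSquareBlockProp, Matrix.updateCol_apply]
  rw [h1, one_mul]
  congr 1
  ext a b
  simp [Matrix.toSquareBlockProp, hM, Matrix.updateCol_apply, b.2]

def auxNeEquiv (α : Type*) (u v : α) (hvu : v ≠ u) :
    {w : α // w ≠ u ∧ w ≠ v} ≃ {a : {w : α // w ≠ u} // ¬ a = (⟨v, hvu⟩ : {w : α // w ≠ u})} where
  toFun w := ⟨⟨w.1, w.2.1⟩, fun h => w.2.2 (congrArg Subtype.val h)⟩
  invFun a := ⟨a.1.1, ⟨a.1.2, fun h => a.2 (Subtype.ext h)⟩⟩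
  left_inv _w := rfl
  right_inv _a := rfl



/-- In the complete multipartite graph `K_{p₁,…,p_r}` (`r ≥ 2`) with Laplacian `L`,
for distinct `u, v` in the same part `V_i`, the resistance distance
`Ω(u,v) = det(L(u,v|u,v)) / det(L(u|u)) = 2/(n−pᵢ)`. -/
theorem resistance_distance_same_part
    (r : ℕ) (hr : 2 ≤ r) (p : Fin r → ℕ) (hp : ∀ i, 1 ≤ p i)
    (n : ℕ) (hn : n = ∑ i, p i)
    (L : Matrix (Σ i : Fin r, Fin (p i)) (Σ i : Fin r, Fin (p i)) ℝ)
    (hL : L = (SimpleGraph.completeMultipartiteGraph fun i : Fin r => Fin (p i)).lapMatrix ℝ)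
    (u v : Σ i : Fin r, Fin (p i)) (i : Fin r)
    (hu : u.1 = i) (hv : v.1 = i) (huv : u ≠ v) :
    Matrix.det
        (L.submatrix
          (Subtype.val : {w : Σ i : Fin r, Fin (p i) // w ≠ u ∧ w ≠ v} → Σ i : Fin r, Fin (p i))
          Subtype.val) /
      Matrix.det
        (L.submatrix
          (Subtype.val : {w : Σ i : Fin r, Fin (p i) // w ≠ u} → Σ i : Fin r, Fin (p i))
          Subtype.val) =
      2 / ((n : ℝ) - p i) := by
  classical
  subst hn hL
  set G := SimpleGraph.completeMultipartiteGraph fun i : Fin r => Fin (p i) with hG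
  set m : ℕ := (∑ j, p j) - p i with hmdef
  have hpi : p i ≤ ∑ j, p j :=
    Finset.single_le_sum (fun j _ => Nat.zero_le _) (Finset.mem_univ i)
  have hmpos : 0 < m := by
    haveI : Nontrivial (Fin r) := ⟨⟨0, by omega⟩, ⟨1, by omega⟩, by simp [Fin.ext_iff]⟩
    obtain ⟨j, hj⟩ := exists_ne i
    have h1 : p j ≤ ∑ k ∈ Finset.univ.erase i, p k :=
      Finset.single_le_sum (fun k _ => Nat.zero_le _)
        (Finset.mem_erase.mpr ⟨hj, Finset.mem_univ j⟩)
    have h2 := Finset.add_sum_erase Finset.univ p (Finset.mem_univ i)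
    have h3 := hp j
    omega
  have hm0 : ((m : ℕ) : ℝ) ≠ 0 := Nat.cast_ne_zero.mpr hmpos.ne'
  have hmcast : ((m : ℕ) : ℝ) = ((∑ j, p j : ℕ) : ℝ) - p i := by
    rw [hmdef, Nat.cast_sub hpi]
  set N := (G.lapMatrix ℝ).submatrix
      (Subtype.val : {w : Σ i : Fin r, Fin (p i) // w ≠ u} → Σ i : Fin r, Fin (p i))
      Subtype.val with hNdef
  set v' : {w : Σ i : Fin r, Fin (p i) // w ≠ u} := ⟨v, Ne.symm huv⟩ with hv'def
  set s : (Σ i : Fin r, Fin (p i)) → ℝ := Pi.single v 1 - Pi.single u 1 with hsdef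
  set z : (Σ i : Fin r, Fin (p i)) → ℝ := fun w => (1 + s w) / (m : ℝ) with hzdef
  have hzu : z u = 0 := by
    simp only [hzdef, hsdef, Pi.sub_apply, Pi.single_apply, if_neg huv, if_pos rfl]
    norm_num
  have hLz : G.lapMatrix ℝ *ᵥ z = s := cm_mulvec r p u v i hu hv huv hm0
  set x : {w : Σ i : Fin r, Fin (p i) // w ≠ u} → ℝ := fun w => z w.val with hxdef
  have hNx : N *ᵥ x = Pi.single v' 1 := by
    funext w
    have h1 : (N *ᵥ x) w = (G.lapMatrix ℝ *ᵥ z) w.val := by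
      simp only [Matrix.mulVec, dotProduct, hNdef, Matrix.submatrix_apply, hxdef]
      rw [← sum_subtype_ne u (fun w' => G.lapMatrix ℝ w.val w' * z w')]
      simp [hzu]
    rw [h1, hLz]
    by_cases hwv : w.val = v
    · have : w = v' := Subtype.ext hwv
      subst this
      simp [hsdef, Pi.single_apply, Ne.symm huv, hwv]
    · have hne : w ≠ v' := fun h => hwv (congrArg Subtype.val h)
      simp [hsdef, Pi.single_apply, hwv, w.2, hne]
  have hpd : N.PosDef := cm_posdef r hr p hp u
  have hdet0 : N.det ≠ 0 := hpd.det_pos.ne'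
  have hcram : (N.updateCol v' (Pi.single v' 1)).det = N.det * x v' := by
    have h2 : Matrix.cramer N (Pi.single v' 1) = N.det • x := by
      rw [← hNx, Matrix.cramer_eq_adjugate_mulVec, Matrix.mulVec_mulVec, Matrix.adjugate_mul,
        Matrix.smul_mulVec, Matrix.one_mulVec]
    have h1 := congrFun h2 v'
    rw [Matrix.cramer_apply] at h1
    rw [h1]; simp
  have hupd : (N.updateCol v' (Pi.single v' 1)).det
      = (N.submatrix (Subtype.val :
          {a : {w : Σ i : Fin r, Fin (p i) // w ≠ u} // ¬ a = v'} → _) Subtype.val).det :=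
    det_updateColumn_single N v'
  have hnum : ((G.lapMatrix ℝ).submatrix
      (Subtype.val : {w : Σ i : Fin r, Fin (p i) // w ≠ u ∧ w ≠ v} → Σ i : Fin r, Fin (p i))
      Subtype.val).det
      = (N.submatrix (Subtype.val :
          {a : {w : Σ i : Fin r, Fin (p i) // w ≠ u} // ¬ a = v'} → _) Subtype.val).det := by
    have hAB : ((G.lapMatrix ℝ).submatrix
        (Subtype.val : {w : Σ i : Fin r, Fin (p i) // w ≠ u ∧ w ≠ v} → Σ i : Fin r, Fin (p i))
        Subtype.val)
        = ((N.submatrix (Subtype.val :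
            {a : {w : Σ i : Fin r, Fin (p i) // w ≠ u} // ¬ a = v'} → _) Subtype.val).submatrix
            (auxNeEquiv _ u v (Ne.symm huv)) (auxNeEquiv _ u v (Ne.symm huv))) := by
      ext a b
      simp [auxNeEquiv, hNdef]
    rw [hAB, Matrix.det_submatrix_equiv_self]
  rw [hnum, ← hupd, hcram]
  rw [mul_comm, mul_div_assoc, div_self hdet0, mul_one]
  have hxv : x v' = 2 / (m : ℝ) := by
    simp only [hxdef, hzdef, hsdef, hv'def, Pi.sub_apply, Pi.single_apply, if_pos rfl,
      if_neg (Ne.symm huv)]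
    norm_num
  rw [hxv, hmcast]
end

section
/- Let G_1,…,G_r (r ≥ 2) be connected simple graphs, where G_i has p_i ≥ 1 vertices, and let n = p_1+⋯+p_r. Let λ^i_1 ≥ ⋯ ≥ λ^i_{p_i−1} > λ^i_{p_i} = 0 be the Laplacian eigenvalues of G_i. Then the Kirchhoff index of the join satisfies Kf(G_1 ∨ ⋯ ∨ G_r) = n·trace((L(G_1 ∨ ⋯ ∨ G_r) + J_n)⁻¹) − 1 = (r − 1) + n · Σ_{i=1}^r Σ_{j=1}^{p_i−1} 1/(n − p_i + λ^i_j). -/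
open BigOperators

/-- The join `G₁ ∨ ⋯ ∨ G_r` of a family of simple graphs on disjoint vertex sets:
two vertices are adjacent iff they lie in different summands, or in the same
summand and are adjacent there. -/
def SimpleGraph.multiJoin {r : ℕ} {p : Fin r → ℕ} (G : ∀ i, SimpleGraph (Fin (p i))) :
    SimpleGraph (Σ i : Fin r, Fin (p i)) where
  Adj u v := u.1 ≠ v.1 ∨
    ∃ (i : Fin r) (a b : Fin (p i)), u = ⟨i, a⟩ ∧ v = ⟨i, b⟩ ∧ (G i).Adj a b
  symm := by
    constructor
    rintro u v (h | ⟨i, a, b, rfl, rfl, hab⟩)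
    · exact Or.inl h.symm
    · exact Or.inr ⟨i, b, a, rfl, rfl, hab.symm⟩
  loopless := by
    constructor
    rintro u (h | ⟨i, a, b, h1, h2, hab⟩)
    · exact h rfl
    · subst h1
      obtain rfl : a = b := by simpa using h2
      exact (G i).loopless.irrefl _ hab

noncomputable instance {r : ℕ} {p : Fin r → ℕ} (G : ∀ i, SimpleGraph (Fin (p i))) :
    DecidableRel (SimpleGraph.multiJoin G).Adj := Classical.decRel _

open Matrix Finset Polynomial

variable {m : Type*} [Fintype m] [DecidableEq m]

lemma aux_det_smul_one_sub {A : Matrix m m ℝ} (hA : A.IsHermitian) (x : ℝ) :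
    Matrix.det (x • (1 : Matrix m m ℝ) - A) = ∏ k, (x - hA.eigenvalues k) := by
  set U := (hA.eigenvectorUnitary : Matrix m m ℝ) with hU
  have h1 : U * star U = 1 := (Matrix.mem_unitaryGroup_iff).mp hA.eigenvectorUnitary.2
  have h2 : star U * U = 1 := (Matrix.mem_unitaryGroup_iff').mp hA.eigenvectorUnitary.2
  have key : x • (1 : Matrix m m ℝ) - A
      = U * (x • (1 : Matrix m m ℝ) - diagonal hA.eigenvalues) * star U := by
    rw [Matrix.mul_sub, Matrix.sub_mul]
    congr 1
    · rw [Matrix.mul_smul, Matrix.mul_one, Matrix.smul_mul, h1]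
    · conv_lhs => rw [hA.spectral_theorem]
      simp [RCLike.ofReal_real_eq_id]
      exact rfl
  rw [key, Matrix.det_mul, Matrix.det_mul, mul_comm (det U), mul_assoc, ← Matrix.det_mul, h1]
  simp [smul_one_eq_diagonal, diagonal_sub, det_diagonal]

lemma aux_trace_inv {A : Matrix m m ℝ} (hA : A.IsHermitian)
    (h0 : ∀ k, hA.eigenvalues k ≠ 0) :
    Matrix.trace A⁻¹ = ∑ k, (hA.eigenvalues k)⁻¹ := by
  set U := (hA.eigenvectorUnitary : Matrix m m ℝ) with hU
  have h1 : U * star U = 1 := (Matrix.mem_unitaryGroup_iff).mp hA.eigenvectorUnitary.2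
  have h2 : star U * U = 1 := (Matrix.mem_unitaryGroup_iff').mp hA.eigenvectorUnitary.2
  have hinv : A⁻¹ = U * diagonal (fun k => (hA.eigenvalues k)⁻¹) * star U := by
    apply Matrix.inv_eq_left_inv
    have hdiag : star U * A * U = diagonal hA.eigenvalues := by
      conv_lhs => rw [hA.spectral_theorem, Unitary.conjStarAlgAut_apply, ← hU]
      rw [show star U * (U * diagonal (RCLike.ofReal ∘ hA.eigenvalues) * star U) * U
          = (star U * U) * diagonal (RCLike.ofReal ∘ hA.eigenvalues) * (star U * U) by
            simp only [Matrix.mul_assoc], h2]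
      simp [RCLike.ofReal_real_eq_id]
    calc (U * diagonal (fun k => (hA.eigenvalues k)⁻¹) * star U) * A
        = U * diagonal (fun k => (hA.eigenvalues k)⁻¹) * star U * (A * (U * star U)) := by
          rw [h1, Matrix.mul_one]
      _ = U * (diagonal (fun k => (hA.eigenvalues k)⁻¹) * (star U * A * U)) * star U := by
          simp only [Matrix.mul_assoc]
      _ = U * (diagonal (fun k => (hA.eigenvalues k)⁻¹) * diagonal hA.eigenvalues) * star U := by
          rw [hdiag]
      _ = 1 := by
          rw [diagonal_mul_diagonal]
          simp only [fun k => inv_mul_cancel₀ (h0 k)]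
          rw [diagonal_one, Matrix.mul_one, h1]
  rw [hinv, Matrix.trace_mul_cycle, h2, Matrix.one_mul, trace_diagonal]

lemma aux_multiset_eq (s t : Multiset ℝ)
    (h : ∀ x : ℝ, ((s.map (fun a => x - a)).prod = (t.map (fun a => x - a)).prod)) :
    s = t := by
  have hP : (s.map fun a => X - C a).prod = (t.map fun a => X - C a).prod := by
    apply Polynomial.funext
    intro x
    rw [Polynomial.eval_multiset_prod, Polynomial.eval_multiset_prod]
    simpa [Multiset.map_map, Function.comp] using h x
  have := congrArg Polynomial.roots hP
  rwa [Polynomial.roots_multiset_prod_X_sub_C, Polynomial.roots_multiset_prod_X_sub_C] at this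

-- J is positive semidefinite
lemma aux_J_posSemidef (m : Type*) [Fintype m] [DecidableEq m] :
    (Matrix.of (fun _ _ => (1:ℝ)) : Matrix m m ℝ).PosSemidef := by
  refine Matrix.PosSemidef.of_dotProduct_mulVec_nonneg (by ext a b; simp [Matrix.conjTranspose_apply]) fun x => ?_
  have : star x ⬝ᵥ ((Matrix.of (fun _ _ => (1:ℝ)) : Matrix m m ℝ) *ᵥ x) = (∑ a, x a)^2 := by
    simp [dotProduct, Matrix.mulVec, sq, Finset.sum_mul]
  rw [this]
  positivity

lemma aux_M_posDef {m : Type*} [Fintype m] [DecidableEq m]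
    (G : SimpleGraph m) [DecidableRel G.Adj] {c : ℝ} (hc : 0 < c) :
    (G.lapMatrix ℝ + c • (1 : Matrix m m ℝ) + Matrix.of (fun _ _ => (1:ℝ))).PosDef := by
  have h1 : (c • (1 : Matrix m m ℝ)).PosDef := by
    rw [smul_one_eq_diagonal]
    exact Matrix.PosDef.diagonal (fun _ => hc)
  exact (Matrix.PosDef.posSemidef_add (G.posSemidef_lapMatrix ℝ) h1).add_posSemidef (aux_J_posSemidef m)

section MultiJoinAux

set_option linter.unusedSectionVars false

variable {r : ℕ} {p : Fin r → ℕ} (G : ∀ i, SimpleGraph (Fin (p i))) [∀ i, DecidableRel (G i).Adj]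

lemma multiJoin_adj_same {i : Fin r} {a b : Fin (p i)} :
    (SimpleGraph.multiJoin G).Adj ⟨i, a⟩ ⟨i, b⟩ ↔ (G i).Adj a b := by
  constructor
  · rintro (h | ⟨i', a', b', h1, h2, hab⟩)
    · exact absurd rfl h
    · rw [Sigma.mk.inj_iff] at h1 h2
      obtain ⟨rfl, ha⟩ := h1
      obtain ⟨-, hb⟩ := h2
      rw [eq_of_heq ha, eq_of_heq hb]
      exact hab
  · intro h
    exact Or.inr ⟨i, a, b, rfl, rfl, h⟩

lemma multiJoin_adj_ne {i k : Fin r} (h : i ≠ k) {a : Fin (p i)} {b : Fin (p k)} :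
    (SimpleGraph.multiJoin G).Adj ⟨i, a⟩ ⟨k, b⟩ :=
  Or.inl h

lemma multiJoin_degree (n : ℕ) (hn : n = ∑ i, p i) (i : Fin r) (a : Fin (p i)) :
    ((SimpleGraph.multiJoin G).degree ⟨i, a⟩ : ℝ) = (G i).degree a + ((n : ℝ) - p i) := by
  rw [SimpleGraph.degree_eq_sum_if_adj]
  rw [← Finset.univ_sigma_univ, Finset.sum_sigma]
  rw [← Finset.add_sum_erase Finset.univ _ (mem_univ i)]
  have h1 : ∑ b : Fin (p i), (if (SimpleGraph.multiJoin G).Adj ⟨i, a⟩ ⟨i, b⟩ then (1:ℝ) else 0)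
      = (G i).degree a := by
    rw [SimpleGraph.degree_eq_sum_if_adj]
    exact Finset.sum_congr rfl (fun b _ => if_congr (multiJoin_adj_same G) rfl rfl)
  have h2 : ∀ k ∈ Finset.univ.erase i,
      ∑ b : Fin (p k), (if (SimpleGraph.multiJoin G).Adj ⟨i, a⟩ ⟨k, b⟩ then (1:ℝ) else 0)
      = (p k : ℝ) := by
    intro k hk
    have hik : i ≠ k := (Finset.ne_of_mem_erase hk).symm
    rw [Finset.sum_congr rfl (fun b _ => if_pos (multiJoin_adj_ne G hik))]
    simp
  rw [h1, Finset.sum_congr rfl h2]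
  have h3 : ∑ k ∈ Finset.univ.erase i, (p k : ℝ) = (n : ℝ) - p i := by
    have := Finset.add_sum_erase Finset.univ (fun k => (p k : ℝ)) (mem_univ i)
    have hn' : (n : ℝ) = ∑ k, (p k : ℝ) := by rw [hn]; push_cast; ring
    rw [hn', ← this]
    ring
  rw [h3]

lemma multiJoin_lap_add_J (n : ℕ) (hn : n = ∑ i, p i) :
    (SimpleGraph.multiJoin G).lapMatrix ℝ + Matrix.of (fun _ _ => (1 : ℝ))
      = Matrix.blockDiagonal' (fun i => (G i).lapMatrix ℝ
          + ((n : ℝ) - p i) • (1 : Matrix (Fin (p i)) (Fin (p i)) ℝ)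
          + Matrix.of (fun _ _ => (1 : ℝ))) := by
  ext u v
  obtain ⟨i, a⟩ := u
  obtain ⟨k, b⟩ := v
  by_cases hik : i = k
  · subst hik
    rw [Matrix.blockDiagonal'_apply_eq]
    by_cases hab : a = b
    · subst hab
      simp only [Matrix.add_apply, SimpleGraph.lapMatrix, Matrix.sub_apply,
        SimpleGraph.degMatrix, Matrix.diagonal_apply_eq, SimpleGraph.adjMatrix_apply,
        Matrix.of_apply, Matrix.smul_apply, Matrix.one_apply_eq, smul_eq_mul, mul_one]
      rw [if_neg ((SimpleGraph.multiJoin G).irrefl), if_neg ((G i).irrefl)]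
      rw [multiJoin_degree G n hn i a]
      ring
    · have hne : (⟨i, a⟩ : Σ j, Fin (p j)) ≠ ⟨i, b⟩ := by
        simp [Sigma.mk.inj_iff, hab]
      simp only [Matrix.add_apply, SimpleGraph.lapMatrix, Matrix.sub_apply,
        SimpleGraph.degMatrix, Matrix.diagonal_apply_ne _ hne, Matrix.diagonal_apply_ne _ hab,
        SimpleGraph.adjMatrix_apply, Matrix.of_apply, Matrix.smul_apply,
        Matrix.one_apply_ne hab, smul_eq_mul, mul_zero]
      rw [if_congr (multiJoin_adj_same G) rfl rfl]
      ring
  · rw [Matrix.blockDiagonal'_apply_ne _ _ _ hik]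
    have hne : (⟨i, a⟩ : Σ j, Fin (p j)) ≠ ⟨k, b⟩ := by
      simp [Sigma.mk.inj_iff, hik]
    simp only [Matrix.add_apply, SimpleGraph.lapMatrix, Matrix.sub_apply,
      SimpleGraph.degMatrix, Matrix.diagonal_apply_ne _ hne, SimpleGraph.adjMatrix_apply,
      Matrix.of_apply]
    rw [if_pos (multiJoin_adj_ne G hik)]
    ring

end MultiJoinAux

lemma aux_block_trace {m : ℕ} (hm : 1 ≤ m)
    (G : SimpleGraph (Fin m)) [DecidableRel G.Adj]
    (c : ℝ) (hc : 0 < c) (lam : Fin m → ℝ)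
    (hchar : ∀ x : ℝ, Matrix.det (x • (1 : Matrix (Fin m) (Fin m) ℝ) - G.lapMatrix ℝ)
      = ∏ j, (x - lam j))
    (hlast : lam ⟨m - 1, Nat.sub_lt hm Nat.one_pos⟩ = 0) :
    Matrix.trace (G.lapMatrix ℝ + c • (1 : Matrix (Fin m) (Fin m) ℝ)
        + Matrix.of (fun _ _ => (1:ℝ)))⁻¹
      = (c + m)⁻¹ + ∑ j ∈ Finset.univ.filter (fun j : Fin m => (j : ℕ) < m - 1),
          (c + lam j)⁻¹ := by
  classical
  set L := G.lapMatrix ℝ with hL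
  set J : Matrix (Fin m) (Fin m) ℝ := Matrix.of (fun _ _ => (1:ℝ)) with hJ
  set M := L + c • (1 : Matrix (Fin m) (Fin m) ℝ) + J with hM
  have hpd : M.PosDef := aux_M_posDef G hc
  have hH : M.IsHermitian := hpd.isHermitian
  set μ := hH.eigenvalues with hμ
  have hμpos : ∀ k, 0 < μ k := fun k => hpd.eigenvalues_pos k
  have htr : Matrix.trace M⁻¹ = ∑ k, (μ k)⁻¹ :=
    aux_trace_inv hH (fun k => (hμpos k).ne')
  -- L * J = 0
  have hLJ : L * J = 0 := by
    ext a b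
    have := congrFun (G.lapMatrix_mulVec_const_eq_zero (R := ℝ)) a
    simpa [Matrix.mul_apply, Matrix.mulVec, dotProduct, hJ] using this
  set last : Fin m := ⟨m - 1, Nat.sub_lt hm Nat.one_pos⟩ with hlastdef
  have hfilter : Finset.univ.filter (fun j : Fin m => (j : ℕ) < m - 1)
      = Finset.univ.erase last := by
    ext j
    simp only [mem_filter, mem_univ, true_and, mem_erase, and_true]
    constructor
    · rintro h rfl
      exact absurd h (lt_irrefl _)
    · intro hne
      have h1 : (j : ℕ) ≤ m - 1 := Nat.le_pred_of_lt j.isLt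
      have h2 : (j : ℕ) ≠ m - 1 := fun h => hne (Fin.ext h)
      omega
  have hprodsplit : ∀ x : ℝ, ∏ j, (x - lam j)
      = x * ∏ j ∈ Finset.univ.filter (fun j : Fin m => (j : ℕ) < m - 1), (x - lam j) := by
    intro x
    rw [hfilter, ← Finset.mul_prod_erase Finset.univ _ (mem_univ last), hlast, sub_zero]
  have hdetJ : ∀ y : ℝ, y ≠ 0 → Matrix.det (y • (1 : Matrix (Fin m) (Fin m) ℝ) - J)
      = y ^ m * (1 - m * y⁻¹) := by
    intro y hy
    have e : y • (1 : Matrix (Fin m) (Fin m) ℝ) - J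
        = y • (1 + Matrix.replicateCol (Fin 1) (fun _ => -y⁻¹) * Matrix.replicateRow (Fin 1) (fun _ => (1:ℝ))) := by
      ext a b
      by_cases hab : a = b <;>
        simp [hab, Matrix.mul_apply, Matrix.one_apply, hJ, smul_eq_mul, mul_add, mul_neg,
          mul_inv_cancel₀ hy, Matrix.replicateCol_apply, Matrix.replicateRow_apply, sub_eq_add_neg]
    rw [e, Matrix.det_smul]
    erw [Matrix.det_one_add_replicateCol_mul_replicateRow]
    simp only [dotProduct, Finset.sum_const, Finset.card_univ, Fintype.card_fin, nsmul_eq_mul,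
      smul_eq_mul, one_mul, mul_neg, mul_one]
    ring
  have hkey : ∀ x : ℝ, x ≠ c → ∏ k, (x - μ k)
      = (x - (c + m)) * ∏ j ∈ Finset.univ.filter (fun j : Fin m => (j : ℕ) < m - 1),
          (x - (c + lam j)) := by
    intro x hx
    set y := x - c with hy
    have hy0 : y ≠ 0 := sub_ne_zero.mpr hx
    have e1 : x • (1 : Matrix (Fin m) (Fin m) ℝ) - M
        = y • (1 : Matrix (Fin m) (Fin m) ℝ) - L - J := by
      rw [hy, sub_smul, hM]; abel
    have e2 : (y • (1 : Matrix (Fin m) (Fin m) ℝ) - L)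
        * (y • (1 : Matrix (Fin m) (Fin m) ℝ) - J)
        = y • (x • (1 : Matrix (Fin m) (Fin m) ℝ) - M) := by
      rw [e1, Matrix.sub_mul, Matrix.mul_sub, Matrix.mul_sub, hLJ]
      simp only [Matrix.smul_mul, Matrix.mul_smul, Matrix.one_mul, Matrix.mul_one,
        smul_smul, smul_sub, sub_zero]
      abel
    have e3 := congrArg Matrix.det e2
    rw [Matrix.det_mul, Matrix.det_smul, Fintype.card_fin, hchar y, hdetJ y hy0,
      aux_det_smul_one_sub hH x, hprodsplit y] at e3
    have hcancel : (y : ℝ) ^ m ≠ 0 := pow_ne_zero _ hy0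
    apply mul_left_cancel₀ hcancel
    rw [← e3]
    have hy1 : y * (1 - (m : ℝ) * y⁻¹) = y - m := by field_simp
    have hterm : ∀ j : Fin m, y - lam j = x - (c + lam j) := by intro j; rw [hy]; ring
    have hhead : y - (m : ℝ) = x - (c + m) := by rw [hy]; ring
    calc y * (∏ j ∈ Finset.univ.filter (fun j : Fin m => (j : ℕ) < m - 1), (y - lam j))
          * (y ^ m * (1 - (m:ℝ) * y⁻¹))
        = y ^ m * ((y * (1 - (m:ℝ) * y⁻¹))
            * ∏ j ∈ Finset.univ.filter (fun j : Fin m => (j : ℕ) < m - 1), (y - lam j)) := by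
          ring
      _ = y ^ m * ((x - (c + m))
            * ∏ j ∈ Finset.univ.filter (fun j : Fin m => (j : ℕ) < m - 1), (x - (c + lam j))) := by
          rw [hy1, hhead]
          congr 1
          congr 1
          exact Finset.prod_congr rfl (fun j _ => hterm j)
  -- extend to all x by continuity
  have hglob : ∀ x : ℝ, ∏ k, (x - μ k)
      = (x - (c + m)) * ∏ j ∈ Finset.univ.filter (fun j : Fin m => (j : ℕ) < m - 1),
          (x - (c + lam j)) := by
    have hf : Continuous (fun x : ℝ => ∏ k, (x - μ k)) :=
      continuous_finset_prod _ (fun k _ => continuous_id.sub continuous_const)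
    have hg : Continuous (fun x : ℝ => (x - (c + m))
        * ∏ j ∈ Finset.univ.filter (fun j : Fin m => (j : ℕ) < m - 1), (x - (c + lam j))) :=
      (continuous_id.sub continuous_const).mul
        (continuous_finset_prod _ (fun k _ => continuous_id.sub continuous_const))
    have := Continuous.ext_on (dense_compl_singleton c) hf hg
      (fun x hx => hkey x (by simpa using hx))
    exact fun x => congrFun this x
  -- multiset equality
  set S := Finset.univ.filter (fun j : Fin m => (j : ℕ) < m - 1) with hS
  have hst : (Finset.univ.val.map μ)
      = (c + m) ::ₘ (S.val.map (fun j => c + lam j)) := by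
    apply aux_multiset_eq
    intro x
    rw [Multiset.map_map, Multiset.map_cons, Multiset.prod_cons, Multiset.map_map]
    calc (Finset.univ.val.map ((fun a => x - a) ∘ μ)).prod
        = ∏ k, (x - μ k) := by rw [Finset.prod_eq_multiset_prod]; rfl
      _ = (x - (c + m)) * ∏ j ∈ S, (x - (c + lam j)) := hglob x
      _ = (x - (c + m)) * (S.val.map ((fun a => x - a) ∘ (fun j => c + lam j))).prod := by
          rw [Finset.prod_eq_multiset_prod]; rfl
  have hsum := congrArg (fun s : Multiset ℝ => (s.map Inv.inv).sum) hst
  simp only [Multiset.map_map, Multiset.map_cons, Multiset.sum_cons] at hsum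
  rw [htr]
  calc ∑ k, (μ k)⁻¹ = (Finset.univ.val.map (Inv.inv ∘ μ)).sum := by
        rw [Finset.sum_eq_multiset_sum]; rfl
    _ = (c + ↑m)⁻¹ + (S.val.map (Inv.inv ∘ fun j => c + lam j)).sum := hsum
    _ = (c + ↑m)⁻¹ + ∑ j ∈ S, (c + lam j)⁻¹ := by
        rw [Finset.sum_eq_multiset_sum]; rfl

/-- **Kirchhoff index of a join.**  Let `G₁,…,G_r` (`r ≥ 2`) be connected simple
graphs, `Gᵢ` on `pᵢ ≥ 1` vertices, `n = Σ pᵢ`, and let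
`λⁱ₁ ≥ ⋯ ≥ λⁱ_{pᵢ₋₁} > λⁱ_{pᵢ} = 0` be the Laplacian eigenvalues of `Gᵢ`
(listed with multiplicity, via the characteristic polynomial of `L(Gᵢ)`).
Then `Kf(G₁ ∨ ⋯ ∨ G_r) = n·tr((L + J)⁻¹) − 1
  = (r−1) + n·Σᵢ Σ_{j<pᵢ−1} 1/(n − pᵢ + λⁱⱼ)`. -/
theorem kirchhoffIndex_multiJoin
    (r : ℕ) (hr : 2 ≤ r) (p : Fin r → ℕ) (hp : ∀ i, 1 ≤ p i)
    (G : ∀ i, SimpleGraph (Fin (p i))) [∀ i, DecidableRel (G i).Adj]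
    (hconn : ∀ i, (G i).Connected)
    (n : ℕ) (hn : n = ∑ i, p i)
    (lam : ∀ i, Fin (p i) → ℝ)
    (hmono : ∀ i, Antitone (lam i))
    (hchar : ∀ i, ∀ x : ℝ,
      Matrix.det (x • (1 : Matrix (Fin (p i)) (Fin (p i)) ℝ) - (G i).lapMatrix ℝ) =
        ∏ j, (x - lam i j))
    (hlast : ∀ i, lam i ⟨p i - 1, Nat.sub_lt (hp i) Nat.one_pos⟩ = 0)
    (hpos : ∀ i, ∀ j : Fin (p i), (j : ℕ) < p i - 1 → 0 < lam i j) :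
    (n : ℝ) *
        Matrix.trace ((SimpleGraph.multiJoin G).lapMatrix ℝ + Matrix.of (fun _ _ => (1 : ℝ)))⁻¹
      - 1 =
      ((r : ℝ) - 1) +
        (n : ℝ) * ∑ i, ∑ j ∈ Finset.univ.filter (fun j : Fin (p i) => (j : ℕ) < p i - 1),
          1 / ((n : ℝ) - p i + lam i j) := by
  classical
  set J : Matrix (Σ i : Fin r, Fin (p i)) (Σ i : Fin r, Fin (p i)) ℝ :=
    Matrix.of (fun _ _ => (1 : ℝ)) with hJdef
  set M : ∀ i : Fin r, Matrix (Fin (p i)) (Fin (p i)) ℝ := fun i =>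
    (G i).lapMatrix ℝ + ((n : ℝ) - p i) • (1 : Matrix (Fin (p i)) (Fin (p i)) ℝ)
      + Matrix.of (fun _ _ => (1 : ℝ)) with hMdef
  have hc : ∀ i, 0 < (n : ℝ) - p i := by
    intro i
    have hlt : p i < n := by
      obtain ⟨j, hj⟩ := Fintype.exists_ne_of_one_lt_card (by simp; omega) i
      rw [hn]
      exact Finset.single_lt_sum hj (Finset.mem_univ i) (Finset.mem_univ j) (hp j)
        (fun k _ _ => Nat.zero_le _)
    have : (p i : ℝ) < n := by exact_mod_cast hlt
    linarith
  have hpd : ∀ i, (M i).PosDef := fun i => aux_M_posDef (G i) (hc i)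
  have hblock :
      (SimpleGraph.multiJoin G).lapMatrix ℝ + J = Matrix.blockDiagonal' M :=
    multiJoin_lap_add_J G n hn
  have hinv : ((SimpleGraph.multiJoin G).lapMatrix ℝ + J)⁻¹
      = Matrix.blockDiagonal' (fun i => (M i)⁻¹) := by
    rw [hblock]
    apply Matrix.inv_eq_left_inv
    rw [← Matrix.blockDiagonal'_mul]
    have heq : (fun i => (M i)⁻¹ * M i) = fun i : Fin r =>
        (1 : Matrix (Fin (p i)) (Fin (p i)) ℝ) := by
      funext i
      exact Matrix.nonsing_inv_mul _ (isUnit_iff_ne_zero.mpr (hpd i).det_pos.ne')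
    rw [heq]
    exact Matrix.blockDiagonal'_one
  have htr : Matrix.trace ((SimpleGraph.multiJoin G).lapMatrix ℝ + J)⁻¹
      = ∑ i, Matrix.trace (M i)⁻¹ := by
    rw [hinv, Matrix.trace_blockDiagonal']
  have hblocktr : ∀ i, Matrix.trace (M i)⁻¹
      = (n : ℝ)⁻¹ + ∑ j ∈ Finset.univ.filter (fun j : Fin (p i) => (j : ℕ) < p i - 1),
          ((n : ℝ) - p i + lam i j)⁻¹ := by
    intro i
    have hres := aux_block_trace (hp i) (G i) ((n : ℝ) - p i) (hc i) (lam i)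
      (hchar i) (hlast i)
    rw [hres]
    have harith : ((n : ℝ) - p i + p i) = (n : ℝ) := by ring
    rw [harith]
  have hn0 : (0 : ℝ) < n := by
    have : 0 < n := by
      rw [hn]
      exact Finset.sum_pos (fun i _ => hp i)
        ⟨⟨0, lt_of_lt_of_le two_pos hr⟩, Finset.mem_univ _⟩
    exact_mod_cast this
  rw [htr]
  rw [Finset.sum_congr rfl (fun i _ => hblocktr i), Finset.sum_add_distrib]
  rw [Finset.sum_const, Finset.card_univ, Fintype.card_fin]
  have hsum : ∀ i, ∑ j ∈ Finset.univ.filter (fun j : Fin (p i) => (j : ℕ) < p i - 1),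
      ((n : ℝ) - p i + lam i j)⁻¹
      = ∑ j ∈ Finset.univ.filter (fun j : Fin (p i) => (j : ℕ) < p i - 1),
          1 / ((n : ℝ) - p i + lam i j) := by
    intro i
    exact Finset.sum_congr rfl (fun j _ => (one_div _).symm)
  rw [Finset.sum_congr rfl (fun i _ => hsum i)]
  field_simp
  have hrn : (n : ℝ) * (r • (1 / (n : ℝ))) = r := by
    rw [nsmul_eq_mul]; field_simp
  rw [mul_add, hrn]; ring
end

section
/- Let K_{p_1,…,p_r} (r ≥ 2, all p_i ≥ 1) be the complete r-partite graph with n = p_1+⋯+p_r vertices and Laplacian L. Then its Kirchhoff index satisfies Kf(K_{p_1,…,p_r}) = n·trace((L + J_n)⁻¹) − 1 = (r − 1) + n · Σ_{i=1}^r (p_i − 1)/(n − p_i), which also equals −1 − r(n−1) + n(n−1) · Σ_{i=1}^r 1/(n − p_i). -/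
open BigOperators Finset Matrix SimpleGraph

/-- **Kirchhoff index of the complete multipartite graph.**  For
`K_{p₁,…,p_r}` (`r ≥ 2`, all `pᵢ ≥ 1`) with `n = Σ pᵢ` vertices and
Laplacian `L`, the Kirchhoff index satisfies
`Kf = n·tr((L + J)⁻¹) − 1 = (r−1) + n·Σᵢ (pᵢ−1)/(n−pᵢ)
   = −1 − r(n−1) + n(n−1)·Σᵢ 1/(n−pᵢ)`. -/
theorem kirchhoffIndex_completeMultipartite
    (r : ℕ) (hr : 2 ≤ r) (p : Fin r → ℕ) (hp : ∀ i, 1 ≤ p i)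
    (n : ℕ) (hn : n = ∑ i, p i)
    (L : Matrix (Σ i : Fin r, Fin (p i)) (Σ i : Fin r, Fin (p i)) ℝ)
    (hL : L = (SimpleGraph.completeMultipartiteGraph fun i : Fin r => Fin (p i)).lapMatrix ℝ) :
    (n : ℝ) * Matrix.trace (L + Matrix.of (fun _ _ => (1 : ℝ)))⁻¹ - 1 =
        ((r : ℝ) - 1) + (n : ℝ) * ∑ i, ((p i : ℝ) - 1) / ((n : ℝ) - p i) ∧
      (n : ℝ) * Matrix.trace (L + Matrix.of (fun _ _ => (1 : ℝ)))⁻¹ - 1 =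
        -1 - r * ((n : ℝ) - 1) + (n : ℝ) * ((n : ℝ) - 1) * ∑ i, 1 / ((n : ℝ) - p i) := by
  -- basic inequalities
  have hple : ∀ i, p i ≤ n := by
    intro i
    rw [hn]
    exact Finset.single_le_sum (fun _ _ => Nat.zero_le _) (mem_univ i)
  have hplt : ∀ i, p i < n := by
    intro i
    obtain ⟨j, hj⟩ := Fintype.exists_ne_of_one_lt_card (by simp; omega) i
    have h2 : p j ≤ ∑ x ∈ univ.erase i, p x :=
      Finset.single_le_sum (fun _ _ => Nat.zero_le _) (Finset.mem_erase.mpr ⟨hj, mem_univ j⟩)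
    have h3 := Finset.add_sum_erase univ p (mem_univ i)
    have := hp j
    omega
  have hn2 : 2 ≤ n := by
    calc 2 ≤ r := hr
    _ = ∑ _i : Fin r, 1 := by simp
    _ ≤ ∑ i, p i := Finset.sum_le_sum (fun i _ => hp i)
    _ = n := hn.symm
  have hnR : (0:ℝ) < n := by exact_mod_cast Nat.lt_of_lt_of_le (by norm_num) hn2
  have hcR : ∀ i, (0:ℝ) < (n:ℝ) - p i := by
    intro i
    have := hplt i
    have : (p i : ℝ) < n := by exact_mod_cast this
    linarith
  -- degree
  have hcard : ∀ i : Fin r, (univ.filter (fun y : Σ i, Fin (p i) => y.1 = i)).card = p i := by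
    intro i
    rw [Finset.card_filter, ← Finset.univ_sigma_univ, Finset.sum_sigma]
    simp [apply_ite Finset.card, Finset.card_univ, Finset.sum_ite_eq']
  have hcV : Fintype.card (Σ i : Fin r, Fin (p i)) = n := by rw [hn]; simp
  have hdeg : ∀ x : Σ i : Fin r, Fin (p i),
      ((completeMultipartiteGraph fun i => Fin (p i)).degree x : ℝ) = n - p x.1 := by
    intro x
    have h1 : (completeMultipartiteGraph fun i => Fin (p i)).degree x = n - p x.1 := by
      rw [← SimpleGraph.card_neighborFinset_eq_degree]
      have h2 : (completeMultipartiteGraph fun i => Fin (p i)).neighborFinset x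
          = univ.filter (fun y : Σ i, Fin (p i) => ¬ (y.1 = x.1)) := by
        ext y
        simp [SimpleGraph.neighborFinset, ne_comm, eq_comm]
      rw [h2]
      have h3 := Finset.card_filter_add_card_filter_not
        (s := (univ : Finset (Σ i : Fin r, Fin (p i)))) (p := fun y => y.1 = x.1)
      rw [hcard x.1, Finset.card_univ, hcV] at h3
      omega
    rw [h1]
    push_cast [hple x.1]
    ring
  -- the matrix L + J as diagonal + block
  set B : Matrix (Σ i : Fin r, Fin (p i)) (Σ i : Fin r, Fin (p i)) ℝ :=
    Matrix.of (fun x y => if x.1 = y.1 then (1:ℝ) else 0) with hB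
  have hLJ : L + Matrix.of (fun _ _ => (1 : ℝ)) =
      Matrix.diagonal (fun x : Σ i : Fin r, Fin (p i) => (n:ℝ) - p x.1) + B := by
    subst hL
    ext x y
    simp only [Matrix.add_apply, SimpleGraph.lapMatrix, Matrix.sub_apply,
      SimpleGraph.degMatrix, Matrix.diagonal_apply, SimpleGraph.adjMatrix_apply,
      Matrix.of_apply, hB, comap_adj, top_adj]
    by_cases h : x = y
    · subst h
      simp [hdeg x]
    · simp only [h, if_false]
      by_cases h2 : x.1 = y.1 <;> simp [h2]
  -- the explicit inverse
  set K : Matrix (Σ i : Fin r, Fin (p i)) (Σ i : Fin r, Fin (p i)) ℝ :=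
    Matrix.of (fun x y => if x.1 = y.1 then
      (1 / ((n:ℝ) - p x.1)) * ((if x = y then 1 else 0) - 1/n) else 0) with hK
  have hinv : (L + Matrix.of (fun _ _ => (1 : ℝ))) * K = 1 := by
    rw [hLJ, Matrix.add_mul]
    ext ⟨i, a⟩ ⟨j, c⟩
    rw [Matrix.add_apply, Matrix.diagonal_mul, Matrix.mul_apply]
    rw [← Finset.univ_sigma_univ, Finset.sum_sigma]
    simp only [hB, hK, Matrix.of_apply, Matrix.one_apply]
    by_cases hij : i = j
    · subst hij
      have hsum : ∀ j : Fin r, ∑ b : Fin (p j),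
          (if i = j then (1:ℝ) else 0) * (if j = i then (1 / ((n:ℝ) - p j)) * ((if (⟨j,b⟩ : Σ i, Fin (p i)) = ⟨i,c⟩ then (1:ℝ) else 0) - 1/n) else 0)
          = if j = i then (1 / ((n:ℝ) - p j)) * (1 - p j / n) else 0 := by
        intro j
        by_cases hji : j = i
        · subst hji
          simp only [if_true, eq_self_iff_true]
          simp only [if_true, one_mul, Sigma.mk.inj_iff, heq_eq_eq, true_and, ← Finset.mul_sum]
          rw [Finset.sum_sub_distrib]
          simp [Finset.sum_ite_eq', Finset.card_univ, div_eq_mul_inv]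
        · simp [hji, Ne.symm hji]
      rw [Finset.sum_congr rfl (fun j _ => hsum j), Finset.sum_ite_eq']
      simp only [mem_univ, eq_self_iff_true, if_true, Sigma.mk.inj_iff, heq_eq_eq, true_and]
      have h1 := hcR i
      have := hnR
      by_cases hac : a = c
      · subst hac; simp only [if_true]; field_simp; ring
      · simp only [hac, if_false]; field_simp; ring
    · simp [hij, Sigma.mk.inj_iff]
  rw [Matrix.inv_eq_right_inv hinv]
  have htr : Matrix.trace K = ∑ i, (p i : ℝ) * (1/((n:ℝ) - p i) * (1 - 1/n)) := by
    rw [Matrix.trace, ← Finset.univ_sigma_univ, Finset.sum_sigma]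
    simp [hK, Matrix.diag, Finset.sum_const, Finset.card_univ, mul_comm]
  rw [htr, Finset.mul_sum]
  constructor
  · have key : ∀ i, (n:ℝ) * ((p i:ℝ) * (1/((n:ℝ) - p i) * (1 - 1/n)))
        = 1 + (n:ℝ) * (((p i:ℝ) - 1)/((n:ℝ) - p i)) := by
      intro i
      have h1 := hcR i
      have h2 := hnR
      field_simp
      ring
    rw [Finset.sum_congr rfl (fun i _ => key i), Finset.sum_add_distrib,
      Finset.sum_const, Finset.card_univ, Fintype.card_fin, ← Finset.mul_sum]
    push_cast
    ring
  · have key : ∀ i, (n:ℝ) * ((p i:ℝ) * (1/((n:ℝ) - p i) * (1 - 1/n)))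
        = (n:ℝ) * ((n:ℝ) - 1) * (1/((n:ℝ) - p i)) - ((n:ℝ) - 1) := by
      intro i
      have h1 := hcR i
      have h2 := hnR
      field_simp
      ring
    rw [Finset.sum_congr rfl (fun i _ => key i), Finset.sum_sub_distrib,
      Finset.sum_const, Finset.card_univ, Fintype.card_fin, ← Finset.mul_sum]
    push_cast
    ring
end

section
/- Let r ≥ 2 and let p_1,…,p_r be positive integers with p_1+⋯+p_r = n. Then Σ_{i=1}^r 1/(n − p_i) ≤ 1/(r−1) + (r−1)/(n−1), with equality for (p_1,…,p_r) = (n−r+1, 1, …, 1). Consequently the Kirchhoff index Kf(K_{p_1,…,p_r}) = −1 − r(n−1) + n(n−1)·Σ_{i=1}^r 1/(n−p_i) is maximal, among all complete r-partite graphs on n vertices, for the graph K_{n−r+1,1^{r−1}}, and Σ_{i=1}^r (p_i−1)/(n−p_i) ≤ (n−r)/(r−1). -/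
open BigOperators

/-- Among positive integers `p₁,…,p_r` summing to `n` (with `r ≥ 2`),
`Σᵢ 1/(n−pᵢ) ≤ 1/(r−1) + (r−1)/(n−1)`, with equality for the part sizes
`(n−r+1, 1, …, 1)`.  Consequently the Kirchhoff index
`Kf(K_{p₁,…,p_r}) = −1 − r(n−1) + n(n−1)·Σᵢ 1/(n−pᵢ)` is maximal for
`K_{n−r+1,1^{r−1}}`, and `Σᵢ (pᵢ−1)/(n−pᵢ) ≤ (n−r)/(r−1)`. -/
theorem kirchhoff_complete_multipartite_max (r n : ℕ) (hr : 2 ≤ r)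
    (p : Fin r → ℕ) (hp : ∀ i, 1 ≤ p i) (hn : ∑ i, p i = n)
    (q : Fin r → ℕ) (hq : q = fun i : Fin r => if (i : ℕ) = 0 then n - r + 1 else 1) :
    (∑ i, 1 / ((n : ℝ) - p i) ≤ 1 / ((r : ℝ) - 1) + ((r : ℝ) - 1) / ((n : ℝ) - 1)) ∧
    (∑ i, 1 / ((n : ℝ) - q i) = 1 / ((r : ℝ) - 1) + ((r : ℝ) - 1) / ((n : ℝ) - 1)) ∧
    (-1 - r * ((n : ℝ) - 1) + n * ((n : ℝ) - 1) * ∑ i, 1 / ((n : ℝ) - p i) ≤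
      -1 - r * ((n : ℝ) - 1) + n * ((n : ℝ) - 1) * ∑ i, 1 / ((n : ℝ) - q i)) ∧
    (∑ i, ((p i : ℝ) - 1) / ((n : ℝ) - p i) ≤ ((n : ℝ) - r) / ((r : ℝ) - 1)) := by
  subst hq
  haveI : NeZero r := ⟨by omega⟩
  have hnr : r ≤ n := by
    rw [← hn]
    calc r = ∑ _i : Fin r, 1 := by simp
    _ ≤ ∑ i, p i := Finset.sum_le_sum fun i _ => hp i
  have hr1 : (1:ℝ) ≤ (r:ℝ) - 1 := by
    have : (2:ℝ) ≤ r := by exact_mod_cast hr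
    linarith
  have hn1 : (1:ℝ) ≤ (n:ℝ) - 1 := by
    have : (2:ℝ) ≤ n := by exact_mod_cast hr.trans hnr
    linarith
  have hsum : ∑ i, (p i : ℝ) = (n : ℝ) := by exact_mod_cast hn
  have hbound : ∀ i, (p i : ℝ) ≤ (n:ℝ) - ((r:ℝ) - 1) := by
    intro i
    have h1 : p i + (r - 1) ≤ n := by
      rw [← hn, ← Finset.add_sum_erase Finset.univ p (Finset.mem_univ i)]
      have h2 : r - 1 ≤ ∑ j ∈ Finset.univ.erase i, p j := by
        calc r - 1 = ∑ _j ∈ Finset.univ.erase i, 1 := by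
              simp [Finset.card_erase_of_mem]
        _ ≤ _ := Finset.sum_le_sum fun j _ => hp j
      omega
    have := (Nat.cast_le (α := ℝ)).2 h1
    push_cast [Nat.cast_sub (by omega : 1 ≤ r)] at this
    linarith
  have hx1 : ∀ i, (1:ℝ) ≤ (p i : ℝ) := fun i => by exact_mod_cast hp i
  have hpos : ∀ i, (0:ℝ) < (n:ℝ) - p i := fun i => by
    have := hbound i; linarith
  -- pointwise chord bound
  have key : ∀ i, 1/((n:ℝ) - p i) ≤
      1/((n:ℝ)-1) + ((p i:ℝ)-1)/(((r:ℝ)-1)*((n:ℝ)-1)) := by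
    intro i
    have h1 := hx1 i
    have h2 := hbound i
    have h3 := hpos i
    rw [div_add_div _ _ (by linarith) (by positivity), div_le_div_iff₀ h3 (by positivity)]
    nlinarith [mul_nonneg (sub_nonneg.2 h1) (by linarith : (0:ℝ) ≤ (n:ℝ) - ((r:ℝ)-1) - p i)]
  have part1 : ∑ i, 1 / ((n : ℝ) - p i) ≤
      1 / ((r : ℝ) - 1) + ((r : ℝ) - 1) / ((n : ℝ) - 1) := by
    calc ∑ i, 1 / ((n : ℝ) - p i)
        ≤ ∑ i, (1/((n:ℝ)-1) + ((p i:ℝ)-1)/(((r:ℝ)-1)*((n:ℝ)-1))) :=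
          Finset.sum_le_sum fun i _ => key i
      _ = 1 / ((r : ℝ) - 1) + ((r : ℝ) - 1) / ((n : ℝ) - 1) := by
          rw [Finset.sum_add_distrib, Finset.sum_const, ← Finset.sum_div,
            Finset.sum_sub_distrib, Finset.sum_const, hsum]
          simp only [Finset.card_univ, Fintype.card_fin, nsmul_eq_mul, smul_eq_mul, mul_one]
          field_simp
          ring
  -- equality case
  have hq0 : ((n - r + 1 : ℕ) : ℝ) = (n:ℝ) - r + 1 := by
    push_cast [Nat.cast_sub hnr]; ring
  have part2 : ∑ i : Fin r, 1 / ((n : ℝ) -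
      (fun i : Fin r => if (i : ℕ) = 0 then n - r + 1 else 1) i) =
      1 / ((r : ℝ) - 1) + ((r : ℝ) - 1) / ((n : ℝ) - 1) := by
    rw [← Finset.add_sum_erase Finset.univ _ (Finset.mem_univ (0 : Fin r))]
    have h0 : ((0 : Fin r) : ℕ) = 0 := rfl
    simp only [h0, if_true, eq_self_iff_true]
    have herase : ∑ i ∈ Finset.univ.erase (0 : Fin r),
        1 / ((n : ℝ) - ((if (i : ℕ) = 0 then (n - r + 1 : ℕ) else 1) : ℕ)) =
        ∑ _i ∈ Finset.univ.erase (0 : Fin r), 1 / ((n:ℝ) - 1) := by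
      apply Finset.sum_congr rfl
      intro i hi
      have : (i : ℕ) ≠ 0 := fun h =>
        (Finset.mem_erase.1 hi).1 (Fin.ext (by simpa using h))
      simp [this]
    rw [herase, Finset.sum_const, Finset.card_erase_of_mem (Finset.mem_univ _)]
    simp only [Finset.card_univ, Fintype.card_fin, nsmul_eq_mul]
    rw [hq0, Nat.cast_sub (by omega : 1 ≤ r)]
    have : (n:ℝ) - ((n:ℝ) - r + 1) = (r:ℝ) - 1 := by ring
    rw [this]
    ring
  refine ⟨part1, part2, ?_, ?_⟩
  · rw [part2]
    have hK : (0:ℝ) ≤ (n:ℝ) * ((n:ℝ) - 1) := by positivity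
    nlinarith [mul_le_mul_of_nonneg_left part1 hK]
  · calc ∑ i, ((p i : ℝ) - 1) / ((n : ℝ) - p i)
        ≤ ∑ i, ((p i : ℝ) - 1) / ((r:ℝ) - 1) := by
          apply Finset.sum_le_sum
          intro i _
          have h1 := hx1 i
          have h3 := hpos i
          have h2 := hbound i
          rw [div_le_div_iff₀ h3 (by linarith)]
          nlinarith
      _ = ((n : ℝ) - r) / ((r : ℝ) - 1) := by
          rw [← Finset.sum_div, Finset.sum_sub_distrib, Finset.sum_const, hsum]
          simp [Finset.card_univ]
end

section
/- Let r ≥ 2 and let p_1,…,p_r be positive integers with p_1+⋯+p_r = n. Set p = ⌊n/r⌋ + 1 and k = n − r·⌊n/r⌋. Then Σ_{i=1}^r 1/(n − p_i) ≥ k/(n − p) + (r − k)/(n − p + 1), with equality for the balanced part sizes having k parts of size p and r−k parts of size p−1. Consequently the Kirchhoff index Kf(K_{p_1,…,p_r}) = −1 − r(n−1) + n(n−1)·Σ_{i=1}^r 1/(n−p_i) is minimal, among all complete r-partite graphs on n vertices, for the graph K_{p^k,(p−1)^{r−k}}. -/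
open BigOperators

set_option maxHeartbeats 1000000

/-- Among positive integers `p₁,…,p_r` summing to `n` (with `r ≥ 2`), setting
`p = ⌊n/r⌋ + 1` and `k = n − r·⌊n/r⌋`, one has
`Σᵢ 1/(n−pᵢ) ≥ k/(n−p) + (r−k)/(n−p+1)`, with equality for the balanced
part sizes (`k` parts of size `p`, `r−k` parts of size `p−1`).  Consequently
the Kirchhoff index `Kf(K_{p₁,…,p_r}) = −1 − r(n−1) + n(n−1)·Σᵢ 1/(n−pᵢ)`
is minimal for `K_{p^k,(p−1)^{r−k}}`. -/
theorem kirchhoff_complete_multipartite_min (r n : ℕ) (hr : 2 ≤ r)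
    (p : Fin r → ℕ) (hp : ∀ i, 1 ≤ p i) (hn : ∑ i, p i = n)
    (pp k : ℕ) (hpp : pp = n / r + 1) (hk : k = n - r * (n / r))
    (q : Fin r → ℕ) (hq : q = fun i : Fin r => if (i : ℕ) < k then pp else pp - 1) :
    ((k : ℝ) / ((n : ℝ) - pp) + ((r : ℝ) - k) / ((n : ℝ) - pp + 1) ≤
      ∑ i, 1 / ((n : ℝ) - p i)) ∧
    (∑ i, 1 / ((n : ℝ) - q i) =
      (k : ℝ) / ((n : ℝ) - pp) + ((r : ℝ) - k) / ((n : ℝ) - pp + 1)) ∧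
    (-1 - r * ((n : ℝ) - 1) + n * ((n : ℝ) - 1) * ∑ i, 1 / ((n : ℝ) - q i) ≤
      -1 - r * ((n : ℝ) - 1) + n * ((n : ℝ) - 1) * ∑ i, 1 / ((n : ℝ) - p i)) := by
  have hr0 : 0 < r := by omega
  have hrn : r ≤ n := by
    calc r = ∑ _i : Fin r, 1 := by simp
    _ ≤ ∑ i, p i := Finset.sum_le_sum fun i _ => hp i
    _ = n := hn
  have hkmod : k = n % r := hk.trans (Nat.eq_sub_of_add_eq (Nat.mod_add_div n r)).symm
  have hkr : k < r := hkmod ▸ Nat.mod_lt n hr0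
  have hrdn : r * (n / r) ≤ n := Nat.mul_div_le n r
  have hd1 : 1 ≤ n / r := (Nat.one_le_div_iff hr0).mpr hrn
  have h2d : 2 * (n / r) ≤ n := le_trans (Nat.mul_le_mul_right _ hr) hrdn
  have hppn : pp ≤ n := by omega
  have hpp1 : 1 ≤ pp := by omega
  have hn2 : 2 ≤ n := le_trans hr hrn
  -- every part is < n
  have hpn : ∀ i, p i < n := by
    intro i
    have i0 : Fin r := ⟨0, hr0⟩
    have i1 : Fin r := ⟨1, by omega⟩
    have : ∃ j : Fin r, j ≠ i := by
      by_cases h : i = (⟨0, hr0⟩ : Fin r)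
      · exact ⟨⟨1, by omega⟩, by simp [h, Fin.ext_iff]⟩
      · exact ⟨⟨0, hr0⟩, fun hji => h (hji ▸ rfl)⟩
    obtain ⟨j, hj⟩ := this
    have hsum := Finset.add_sum_erase Finset.univ p (Finset.mem_univ i)
    have hjm : j ∈ Finset.univ.erase i := Finset.mem_erase.mpr ⟨hj, Finset.mem_univ j⟩
    have hple : p j ≤ ∑ x ∈ Finset.univ.erase i, p x :=
      Finset.single_le_sum (fun x _ => Nat.zero_le _) hjm
    have := hp j
    omega
  -- cast facts
  have hcastsum : ∑ i, ((p i : ℝ)) = (n : ℝ) := by rw [← Nat.cast_sum, hn]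
  have hA : ((pp - 1 : ℕ) : ℝ) = (pp : ℝ) - 1 := by
    rw [Nat.cast_sub hpp1]; norm_num
  -- Part 2: value at the balanced point
  have h2 : ∑ i, 1 / ((n : ℝ) - q i) =
      (k : ℝ) / ((n : ℝ) - pp) + ((r : ℝ) - k) / ((n : ℝ) - pp + 1) := by
    subst hq
    simp only
    rw [Fin.sum_univ_eq_sum_range (fun i => 1 / ((n : ℝ) - ↑(if i < k then pp else pp - 1)))]
    rw [← Finset.sum_range_add_sum_Ico _ (le_of_lt hkr)]
    have e1 : ∑ i ∈ Finset.range k, (1 : ℝ) / ((n : ℝ) - ↑(if i < k then pp else pp - 1)) =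
        (k : ℝ) / ((n : ℝ) - pp) := by
      rw [Finset.sum_congr rfl (fun i hi => by
        rw [if_pos (Finset.mem_range.mp hi)] : ∀ i ∈ Finset.range k,
          (1 : ℝ) / ((n : ℝ) - ↑(if i < k then pp else pp - 1)) = 1 / ((n : ℝ) - pp))]
      rw [Finset.sum_const, Finset.card_range, nsmul_eq_mul]
      ring
    have e2 : ∑ i ∈ Finset.Ico k r, (1 : ℝ) / ((n : ℝ) - ↑(if i < k then pp else pp - 1)) =
        ((r : ℝ) - k) / ((n : ℝ) - pp + 1) := by
      rw [Finset.sum_congr rfl (fun i hi => by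
        rw [if_neg (by have := (Finset.mem_Ico.mp hi).1; omega : ¬ i < k), hA] : ∀ i ∈ Finset.Ico k r,
          (1 : ℝ) / ((n : ℝ) - ↑(if i < k then pp else pp - 1)) = 1 / ((n : ℝ) - ((pp : ℝ) - 1)))]
      rw [Finset.sum_const, Nat.card_Ico, nsmul_eq_mul, Nat.cast_sub (le_of_lt hkr)]
      ring
    rw [e1, e2]
  -- Part 1
  have h1 : (k : ℝ) / ((n : ℝ) - pp) + ((r : ℝ) - k) / ((n : ℝ) - pp + 1) ≤
      ∑ i, 1 / ((n : ℝ) - p i) := by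
    by_cases hcase : pp < n
    · -- main case: secant line argument
      have ha1 : (1 : ℝ) ≤ (n : ℝ) - pp := by
        have : (pp : ℝ) + 1 ≤ n := by exact_mod_cast hcase
        linarith
      have ha0 : (0 : ℝ) < (n : ℝ) - pp := by linarith
      have hb0 : (0 : ℝ) < (n : ℝ) - pp + 1 := by linarith
      have key : ∀ i, 1 / ((n : ℝ) - pp + 1) +
          ((p i : ℝ) - ((pp : ℝ) - 1)) * (1 / (((n : ℝ) - pp) * ((n : ℝ) - pp + 1))) ≤
          1 / ((n : ℝ) - p i) := by
        intro i
        have ht1 : (1 : ℝ) ≤ (n : ℝ) - p i := by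
          have : (p i : ℝ) + 1 ≤ n := by exact_mod_cast hpn i
          linarith
        have ht0 : (0 : ℝ) < (n : ℝ) - p i := by linarith
        have hgap : p i ≤ pp - 1 ∨ pp ≤ p i := by omega
        have hquad : 0 ≤ (((n : ℝ) - p i) - ((n : ℝ) - pp)) *
            (((n : ℝ) - p i) - ((n : ℝ) - pp + 1)) := by
          rcases hgap with h | h
          · have : (p i : ℝ) + 1 ≤ pp := by
              have : p i + 1 ≤ pp := by omega
              exact_mod_cast this
            nlinarith
          · have : (pp : ℝ) ≤ p i := by exact_mod_cast h
            nlinarith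
        have heq : 1 / ((n : ℝ) - pp + 1) +
            ((p i : ℝ) - ((pp : ℝ) - 1)) * (1 / (((n : ℝ) - pp) * ((n : ℝ) - pp + 1))) =
            (((n : ℝ) - pp) + ((n : ℝ) - pp + 1) - ((n : ℝ) - p i)) /
              (((n : ℝ) - pp) * ((n : ℝ) - pp + 1)) := by
          field_simp
          ring
        rw [heq, div_le_div_iff₀ (by positivity) ht0]
        nlinarith
      have hsum := Finset.sum_le_sum (fun i (_ : i ∈ Finset.univ) => key i)
      have hlhs : ∑ i, (1 / ((n : ℝ) - pp + 1) +
          ((p i : ℝ) - ((pp : ℝ) - 1)) * (1 / (((n : ℝ) - pp) * ((n : ℝ) - pp + 1)))) =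
          (r : ℝ) * (1 / ((n : ℝ) - pp + 1)) +
          ((n : ℝ) - r * ((pp : ℝ) - 1)) * (1 / (((n : ℝ) - pp) * ((n : ℝ) - pp + 1))) := by
        rw [Finset.sum_add_distrib, Finset.sum_const, Finset.card_univ, Fintype.card_fin,
          nsmul_eq_mul, ← Finset.sum_mul, Finset.sum_sub_distrib, Finset.sum_const,
          Finset.card_univ, Fintype.card_fin, nsmul_eq_mul, hcastsum]
      have hkcast : (k : ℝ) = (n : ℝ) - r * ((pp : ℝ) - 1) := by
        have hd : (pp : ℝ) - 1 = ((n / r : ℕ) : ℝ) := by rw [hpp]; push_cast; ring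
        rw [hd, hk, Nat.cast_sub hrdn]
        push_cast
        ring
      have hfin : (k : ℝ) / ((n : ℝ) - pp) + ((r : ℝ) - k) / ((n : ℝ) - pp + 1) =
          (r : ℝ) * (1 / ((n : ℝ) - pp + 1)) +
          ((n : ℝ) - r * ((pp : ℝ) - 1)) * (1 / (((n : ℝ) - pp) * ((n : ℝ) - pp + 1))) := by
        rw [← hkcast]
        field_simp
        ring
      rw [hfin, ← hlhs]
      exact hsum
    · -- degenerate case: pp = n, forcing n = 2, r = 2, k = 0
      have hppe : pp = n := le_antisymm hppn (not_lt.mp hcase)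
      have hnr1 : n / r = 1 := by omega
      have hrd : r * (n / r) = r := by rw [hnr1, mul_one]
      have hne2 : n = 2 := by omega
      have hk0 : k = 0 := by omega
      have hpi1 : ∀ i, p i = 1 := by
        intro i
        have := hpn i
        have := hp i
        omega
      have hsum : ∑ i, 1 / ((n : ℝ) - p i) = (r : ℝ) := by
        rw [Finset.sum_congr rfl (fun i _ => by
          rw [hpi1 i, hne2]; norm_num : ∀ i ∈ Finset.univ,
            1 / ((n : ℝ) - p i) = (1 : ℝ))]
        simp
      rw [hsum, hk0, hppe]
      norm_num
  refine ⟨h1, h2, ?_⟩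
  have hM : (0 : ℝ) ≤ (n : ℝ) * ((n : ℝ) - 1) := by
    have : (2 : ℝ) ≤ n := by exact_mod_cast hn2
    nlinarith
  rw [h2]
  nlinarith [mul_le_mul_of_nonneg_left h1 hM]
end

section
/- Let r ≥ 2 and let p_1,…,p_r be positive integers with p_1+⋯+p_r = n; set p = ⌊n/r⌋ + 1 and k = n − r·⌊n/r⌋. For a complete r-partite graph with m edges let F(m) = −(2m/n)² + 2m(n−1), so that Kf'(K_{p_1,…,p_r}) = F(m) where m = (n² − Σ p_i²)/2. Then Kf' is increasing in the number of edges, and Kf'(K_{n−r+1,1^{r−1}}) ≤ Kf'(K_{p_1,…,p_r}) ≤ Kf'(K_{p^k,(p−1)^{r−k}}); explicitly, writing m₀ = (n² − (n−r+1)² − (r−1))/2 and m₁ = (n² − k·p² − (r−k)(p−1)²)/2, one has F(m₀) ≤ F(m) ≤ F(m₁). -/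
set_option maxHeartbeats 1000000


open BigOperators

/-- For complete `r`-partite graphs on `n` vertices, the degree Kirchhoff index
`Kf' = F(m) = −(2m/n)² + 2m(n−1)` is an increasing function of the number of
edges `m` (on the range of possible edge counts), and consequently
`Kf'(K_{n−r+1,1^{r−1}}) ≤ Kf'(K_{p₁,…,p_r}) ≤ Kf'(K_{p^k,(p−1)^{r−k}})`,
i.e. `F(m₀) ≤ F(m) ≤ F(m₁)`. -/
theorem degreeKirchhoff_monotone_edges (r n : ℕ) (hr : 2 ≤ r)
    (p : Fin r → ℕ) (hp : ∀ i, 1 ≤ p i) (hn : ∑ i, p i = n)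
    (pp k : ℕ) (hpp : pp = n / r + 1) (hk : k = n - r * (n / r))
    (F : ℝ → ℝ) (hF : F = fun m => -(2 * m / n) ^ 2 + 2 * m * ((n : ℝ) - 1))
    (m m₀ m₁ : ℝ)
    (hm : m = ((n : ℝ) ^ 2 - ∑ i, (p i : ℝ) ^ 2) / 2)
    (hm0 : m₀ = ((n : ℝ) ^ 2 - ((n : ℝ) - r + 1) ^ 2 - ((r : ℝ) - 1)) / 2)
    (hm1 : m₁ = ((n : ℝ) ^ 2 - k * (pp : ℝ) ^ 2 - ((r : ℝ) - k) * ((pp : ℝ) - 1) ^ 2) / 2) :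
    (∀ a b : ℝ, 0 ≤ a → a ≤ b → b ≤ (n : ℝ) * ((n : ℝ) - 1) / 2 → F a ≤ F b) ∧
      F m₀ ≤ F m ∧ F m ≤ F m₁ := by
  have hrn : r ≤ n := by
    calc r = ∑ _i : Fin r, 1 := by simp
      _ ≤ ∑ i, p i := Finset.sum_le_sum fun i _ => hp i
      _ = n := hn
  have hn2 : 2 ≤ n := le_trans hr hrn
  have hnR : (2:ℝ) ≤ (n:ℝ) := by exact_mod_cast hn2
  have hrR : (2:ℝ) ≤ (r:ℝ) := by exact_mod_cast hr
  have hrnR : (r:ℝ) ≤ (n:ℝ) := by exact_mod_cast hrn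
  have hnpos : (0:ℝ) < (n:ℝ) := by linarith
  -- monotonicity of F
  have mono : ∀ a b : ℝ, 0 ≤ a → a ≤ b → b ≤ (n : ℝ) * ((n : ℝ) - 1) / 2 → F a ≤ F b := by
    intro a b ha hab hb
    have key : 0 ≤ (b - a) * (2 * ((n:ℝ) - 1) * (n:ℝ)^2 - 4 * (a + b)) := by
      apply mul_nonneg (by linarith)
      nlinarith [mul_nonneg (mul_nonneg hnpos.le (by linarith : (0:ℝ) ≤ (n:ℝ) - 1))
        (by linarith : (0:ℝ) ≤ (n:ℝ) - 2)]
    have hdiff : F b - F a =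
        ((b - a) * (2 * ((n:ℝ) - 1) * (n:ℝ)^2 - 4 * (a + b))) / (n:ℝ)^2 := by
      rw [hF]; field_simp; ring
    have h0 : (0:ℝ) ≤ F b - F a := by
      rw [hdiff]; exact div_nonneg key (by positivity)
    linarith
  -- integer sum facts
  have hr0 : 0 < r := by omega
  have hdm : r * (n / r) + n % r = n := Nat.div_add_mod n r
  have hmlt : n % r < r := Nat.mod_lt n hr0
  set q : ℕ := n / r with hq
  have hnrk : n = r * q + k := by omega
  have hkr : k < r := by omega
  have hrq : r * q ≤ n := by omega
  have hnrkZ : (n:ℤ) = (r:ℤ) * q + k := by exact_mod_cast hnrk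
  have hsumZ : ∑ i, (p i : ℤ) = (n:ℤ) := by exact_mod_cast hn
  -- upper bound on sum of squares
  have hS1 : ∑ i, (p i:ℤ)^2 ≤ ((n:ℤ) - r + 1)^2 + ((r:ℤ) - 1) := by
    have hf : ∀ i : Fin r, (0:ℤ) ≤ (p i:ℤ) - 1 := fun i => by
      have := hp i; exact_mod_cast by omega
    have hsf : ∑ i, ((p i:ℤ) - 1) = (n:ℤ) - r := by
      rw [Finset.sum_sub_distrib, hsumZ]
      simp [Finset.card_univ]
    have hbound : ∀ i : Fin r, ((p i:ℤ) - 1)^2 ≤ ((p i:ℤ) - 1) * ((n:ℤ) - r) := by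
      intro i
      have h1 : (p i:ℤ) - 1 ≤ (n:ℤ) - r := by
        rw [← hsf]
        exact Finset.single_le_sum (fun j _ => hf j) (Finset.mem_univ i)
      nlinarith [hf i]
    have h2 : ∑ i, ((p i:ℤ) - 1)^2 ≤ ((n:ℤ) - r)^2 := by
      calc ∑ i, ((p i:ℤ) - 1)^2 ≤ ∑ i, ((p i:ℤ) - 1) * ((n:ℤ) - r) :=
            Finset.sum_le_sum fun i _ => hbound i
        _ = ((n:ℤ) - r) * ((n:ℤ) - r) := by rw [← Finset.sum_mul, hsf]
        _ = ((n:ℤ) - r)^2 := by ring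
    have hexp1 : ∑ i, (p i:ℤ)^2 = ∑ i, ((p i:ℤ) - 1)^2 + 2 * (n:ℤ) - r := by
      have h3 : ∑ i, (p i:ℤ)^2 = ∑ i, (((p i:ℤ) - 1)^2 + 2 * (p i:ℤ) - 1) :=
        Finset.sum_congr rfl fun i _ => by ring
      rw [h3, Finset.sum_sub_distrib, Finset.sum_add_distrib, ← Finset.mul_sum, hsumZ]
      simp [Finset.card_univ]
    have h4 : ((n:ℤ) - r + 1)^2 + ((r:ℤ) - 1) = ((n:ℤ) - r)^2 + 2 * n - r := by ring
    linarith
  -- lower bound on sum of squares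
  have hsum_e : ∑ i, ((p i:ℤ) - q) = (k:ℤ) := by
    rw [Finset.sum_sub_distrib, hsumZ]
    simp only [Finset.sum_const, Finset.card_univ, Fintype.card_fin, nsmul_eq_mul]
    omega
  have hS2 : (k:ℤ) * ((q:ℤ) + 1)^2 + ((r:ℤ) - k) * (q:ℤ)^2 ≤ ∑ i, (p i:ℤ)^2 := by
    have he : ∀ i : Fin r, ((p i:ℤ) - q) ≤ ((p i:ℤ) - q)^2 := by
      intro i
      generalize (p i:ℤ) - (q:ℤ) = e
      rcases le_or_gt e 0 with h | h
      · exact le_trans h (sq_nonneg e)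
      · calc e = e * 1 := (mul_one e).symm
          _ ≤ e * e := mul_le_mul_of_nonneg_left h (by linarith)
          _ = e^2 := (sq e).symm
    have h1 : (k:ℤ) ≤ ∑ i, ((p i:ℤ) - q)^2 := by
      calc (k:ℤ) = ∑ i, ((p i:ℤ) - q) := hsum_e.symm
        _ ≤ ∑ i, ((p i:ℤ) - q)^2 := Finset.sum_le_sum fun i _ => he i
    have hexp : ∑ i, (p i:ℤ)^2 = ∑ i, ((p i:ℤ) - q)^2 + 2 * q * n - r * (q:ℤ)^2 := by
      have h3 : ∑ i, (p i:ℤ)^2 = ∑ i, (((p i:ℤ) - q)^2 + 2 * (q:ℤ) * (p i:ℤ) - (q:ℤ)^2) :=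
        Finset.sum_congr rfl fun i _ => by ring
      rw [h3, Finset.sum_sub_distrib, Finset.sum_add_distrib, ← Finset.mul_sum, hsumZ]
      simp [Finset.card_univ]
    rw [hexp, hnrkZ]
    nlinarith [h1]
  -- transfer to ℝ
  have hcastS : ((∑ i, (p i:ℤ)^2 : ℤ) : ℝ) = ∑ i, (p i:ℝ)^2 := by push_cast; ring
  have hS1R : ∑ i, (p i:ℝ)^2 ≤ ((n:ℝ) - r + 1)^2 + ((r:ℝ) - 1) := by
    rw [← hcastS]; exact_mod_cast hS1
  have hppR : (pp:ℝ) = (q:ℝ) + 1 := by rw [hpp]; push_cast; ring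
  have hS2R : (k:ℝ) * (pp:ℝ)^2 + ((r:ℝ) - k) * ((pp:ℝ) - 1)^2 ≤ ∑ i, (p i:ℝ)^2 := by
    rw [← hcastS, hppR]
    calc (k:ℝ) * ((q:ℝ) + 1)^2 + ((r:ℝ) - k) * ((q:ℝ) + 1 - 1)^2
        = (((k:ℤ) * ((q:ℤ) + 1)^2 + ((r:ℤ) - k) * (q:ℤ)^2 : ℤ) : ℝ) := by push_cast; ring
      _ ≤ _ := by exact_mod_cast hS2
  -- sum of squares at least n
  have hSn : (n:ℝ) ≤ ∑ i, (p i:ℝ)^2 := by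
    have hnat : n ≤ ∑ i, (p i)^2 := by
      rw [← hn]
      exact Finset.sum_le_sum fun i _ => Nat.le_self_pow two_ne_zero (p i)
    calc (n:ℝ) ≤ ((∑ i, (p i)^2 : ℕ) : ℝ) := by exact_mod_cast hnat
      _ = ∑ i, (p i:ℝ)^2 := by push_cast; ring
  -- balanced sum of squares at least n
  have hbal : (n:ℤ) ≤ (k:ℤ) * ((q:ℤ) + 1)^2 + ((r:ℤ) - k) * (q:ℤ)^2 := by
    rw [hnrkZ]
    have hq2 : (q:ℤ) ≤ (q:ℤ)^2 := by
      have : q ≤ q^2 := Nat.le_self_pow two_ne_zero q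
      exact_mod_cast this
    have hk0 : (0:ℤ) ≤ (k:ℤ) := Int.natCast_nonneg k
    have hq0 : (0:ℤ) ≤ (q:ℤ) := Int.natCast_nonneg q
    have hr0 : (0:ℤ) ≤ (r:ℤ) := Int.natCast_nonneg r
    nlinarith [mul_nonneg hk0 hq0]
  -- ordering of m₀, m, m₁
  have h01 : m₀ ≤ m := by rw [hm0, hm]; linarith
  have h12 : m ≤ m₁ := by rw [hm, hm1]; linarith
  have hm0nonneg : (0:ℝ) ≤ m₀ := by
    rw [hm0]
    nlinarith [sq_nonneg ((n:ℝ) - r)]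
  have hm1top : m₁ ≤ (n:ℝ) * ((n:ℝ) - 1) / 2 := by
    rw [hm1, hppR]
    have hbalR : (n:ℝ) ≤ (k:ℝ) * ((q:ℝ) + 1)^2 + ((r:ℝ) - k) * (q:ℝ)^2 := by
      calc (n:ℝ) = (((n:ℤ)):ℝ) := by norm_cast
        _ ≤ (((k:ℤ) * ((q:ℤ) + 1)^2 + ((r:ℤ) - k) * (q:ℤ)^2 : ℤ) : ℝ) := by
            exact_mod_cast hbal
        _ = (k:ℝ) * ((q:ℝ) + 1)^2 + ((r:ℝ) - k) * (q:ℝ)^2 := by push_cast; ring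
    nlinarith [hbalR]
  have hmtop : m ≤ (n:ℝ) * ((n:ℝ) - 1) / 2 := by
    rw [hm]; nlinarith [hSn]
  exact ⟨mono, mono m₀ m hm0nonneg h01 hmtop,
    mono m m₁ (le_trans hm0nonneg h01) h12 hm1top⟩
end
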